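/- arXiv:1707.05923 — 11 statements merged into one kernel-verified Lean document; each statement's English description precedes it below -/
import Mathlib

section
/- In the WMM axiomatic model, the out-of-thin-air behavior of the LB-style litmus test is forbidden: for a program where processor P1 executes r1 = Ld b then St a r1, and processor P2 executes r2 = Ld a then St b r2, with all memory initialized to 0, every execution satisfying the WMM axioms yields r1 = 0 and r2 = 0. -/
/-- Instruction operations of the WMM axiomatic model. -/
inductive IOp
  | ld (a : ℕ)
  | st (a : ℕ) (v : ℕ)
  | commit
  | reconcile
  | nm
  deriving DecidableEq

/-- An instruction: processor id, position in program order, operation. -/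
structure Instr where
  proc : ℕ
  idx : ℕ
  op : IOp
  deriving DecidableEq

/-- Per-processor program order. -/
def po (x y : Instr) : Prop := x.proc = y.proc ∧ x.idx < y.idx

/-- The WMM order-preserving table `order(X, Y)`. -/
def ordTable : IOp → IOp → Prop
  | .ld a, .ld b => a = b
  | .ld _, .st _ _ => True
  | .ld _, .reconcile => True
  | .ld _, .commit => True
  | .st a _, .st b _ => a = b
  | .st _ _, .commit => True
  | .st _ _, .ld _ => False
  | .st _ _, .reconcile => False
  | .reconcile, .ld _ => True
  | .reconcile, .st _ _ => True
  | .reconcile, .reconcile => True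
  | .reconcile, .commit => True
  | .commit, .ld _ => False
  | .commit, .st _ _ => True
  | .commit, .reconcile => True
  | .commit, .commit => True
  | _, _ => False

def isStoreTo (a : ℕ) (x : Instr) : Prop := ∃ v, x.op = IOp.st a v
def isLoadOf (a : ℕ) (x : Instr) : Prop := x.op = IOp.ld a

/-- A WMM axiomatic execution: a set of instructions `I`, a global memory
order `mo` (strict total on `I`), a reads-from relation `rf`, satisfying the
Inst-Order and Ld-Val axioms of WMM. -/
structure WMMAx where
  I : Set Instr
  mo : Instr → Instr → Prop
  rf : Instr → Instr → Prop
  mo_irrefl : ∀ x, ¬ mo x x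
  mo_trans : ∀ {x y z}, mo x y → mo y z → mo x z
  mo_total : ∀ x ∈ I, ∀ y ∈ I, x ≠ y → mo x y ∨ mo y x
  instOrder : ∀ x ∈ I, ∀ y ∈ I, po x y → ordTable x.op y.op → mo x y
  rf_mem : ∀ {S L}, rf S L → S ∈ I ∧ L ∈ I
  ldVal : ∀ {S L a}, rf S L → L.op = IOp.ld a →
    isStoreTo a S ∧ (mo S L ∨ po S L) ∧
    ∀ S' ∈ I, isStoreTo a S' → (mo S' L ∨ po S' L) → S' = S ∨ mo S' S

/-- Out-of-thin-air (LB-style) behavior is forbidden in WMM: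
P1: r1 = Ld b; St a r1 and P2: r2 = Ld a; St b r2, with a ≠ b and memory
initialized to 0; every execution satisfying the WMM axioms yields
r1 = 0 and r2 = 0. -/
theorem wmm_no_out_of_thin_air (a b r1 r2 : ℕ) (hab : a ≠ b) (E : WMMAx)
    (L1 S1 L2 S2 Ia Ib SL1 SL2 : Instr)
    (hL1 : L1 = ⟨1, 0, IOp.ld b⟩) (hS1 : S1 = ⟨1, 1, IOp.st a r1⟩)
    (hL2 : L2 = ⟨2, 0, IOp.ld a⟩) (hS2 : S2 = ⟨2, 1, IOp.st b r2⟩)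
    (hIa : Ia = ⟨0, 0, IOp.st a 0⟩) (hIb : Ib = ⟨0, 1, IOp.st b 0⟩)
    (hI : E.I = {L1, S1, L2, S2, Ia, Ib})
    (hminA : ∀ x ∈ E.I, (isStoreTo a x ∨ isLoadOf a x) → x ≠ Ia → E.mo Ia x)
    (hminB : ∀ x ∈ E.I, (isStoreTo b x ∨ isLoadOf b x) → x ≠ Ib → E.mo Ib x)
    (hrf1 : E.rf SL1 L1) (hv1 : SL1.op = IOp.st b r1)
    (hrf2 : E.rf SL2 L2) (hv2 : SL2.op = IOp.st a r2) :
    r1 = 0 ∧ r2 = 0 := by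

  have hS1I : S1 ∈ E.I := by rw [hI]; simp
  have hL1I : L1 ∈ E.I := by rw [hI]; simp
  have hS2I : S2 ∈ E.I := by rw [hI]; simp
  have hL2I : L2 ∈ E.I := by rw [hI]; simp
  have hSL1I : SL1 ∈ E.I := (E.rf_mem hrf1).1
  have hSL2I : SL2 ∈ E.I := (E.rf_mem hrf2).1
  -- identify SL1
  have hSL1cases : SL1 = S2 ∧ r1 = r2 ∨ r1 = 0 := by
    have := hSL1I
    rw [hI] at this
    simp only [Set.mem_insert_iff, Set.mem_singleton_iff] at this
    rcases this with h | h | h | h | h | h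
    · exfalso; rw [h, hL1] at hv1; simp at hv1
    · exfalso; rw [h, hS1] at hv1; simp at hv1; exact hab hv1
    · exfalso; rw [h, hL2] at hv1; simp at hv1
    · left; rw [h, hS2] at hv1; simp at hv1; exact ⟨h, hv1.symm⟩
    · exfalso; rw [h, hIa] at hv1; simp at hv1; exact hab hv1.1
    · right; rw [h, hIb] at hv1; simp at hv1; exact hv1.symm
  have hSL2cases : SL2 = S1 ∧ r2 = r1 ∨ r2 = 0 := by
    have := hSL2I
    rw [hI] at this
    simp only [Set.mem_insert_iff, Set.mem_singleton_iff] at this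
    rcases this with h | h | h | h | h | h
    · exfalso; rw [h, hL1] at hv2; simp at hv2
    · left; rw [h, hS1] at hv2; simp at hv2; exact ⟨h, hv2.symm⟩
    · exfalso; rw [h, hL2] at hv2; simp at hv2
    · exfalso; rw [h, hS2] at hv2; simp at hv2; exact hab hv2.symm
    · right; rw [h, hIa] at hv2; simp at hv2; exact hv2.symm
    · exfalso; rw [h, hIb] at hv2; simp at hv2; exact hab hv2.1.symm
  rcases hSL1cases with ⟨h1, e1⟩ | e1
  · rcases hSL2cases with ⟨h2, e2⟩ | e2
    · -- cycle: contradiction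
      exfalso
      have moL1S1 : E.mo L1 S1 := by
        apply E.instOrder L1 hL1I S1 hS1I
        · rw [hL1, hS1]; exact ⟨rfl, Nat.zero_lt_one⟩
        · rw [hL1, hS1]; trivial
      have moL2S2 : E.mo L2 S2 := by
        apply E.instOrder L2 hL2I S2 hS2I
        · rw [hL2, hS2]; exact ⟨rfl, Nat.zero_lt_one⟩
        · rw [hL2, hS2]; trivial
      have moS2L1 : E.mo S2 L1 := by
        have := (E.ldVal hrf1 (by rw [hL1])).2.1
        rcases this with h | h
        · rwa [h1] at h
        · rw [h1, hS2, hL1] at h; simp [po] at h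
      have moS1L2 : E.mo S1 L2 := by
        have := (E.ldVal hrf2 (by rw [hL2])).2.1
        rcases this with h | h
        · rwa [h2] at h
        · rw [h2, hS1, hL2] at h; simp [po] at h
      exact E.mo_irrefl S1 (E.mo_trans (E.mo_trans moS1L2 moL2S2) (E.mo_trans moS2L1 moL1S1))
    · exact ⟨e1.trans e2, e2⟩
  · rcases hSL2cases with ⟨h2, e2⟩ | e2
    · exact ⟨e1, e2.trans e1⟩
    · exact ⟨e1, e2⟩
end

section
/- In the WMM axiomatic model, the SB litmus test behavior is allowed: there exists an execution satisfying the WMM axioms of the program where P1 executes St a 1 then r1 = Ld b, and P2 executes St b 1 then r2 = Ld a (a ≠ b, memory initialized to 0), in which r1 = 0 and r2 = 0. -/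
/-!
Since `order(St, Ld) = False`, each processor's store may follow its own later load in memory
order. With the memory order "initialization stores, then both loads, then both stores", the only
stores to a load's address that precede it in memory or program order are the initialization
stores, so both loads read 0.
-/

namespace SB

def instrs (a b : ℕ) : Set Instr :=
  {⟨1, 0, .st a 1⟩, ⟨1, 1, .ld b⟩, ⟨2, 0, .st b 1⟩, ⟨2, 1, .ld a⟩, ⟨0, 0, .st a 0⟩, ⟨0, 1, .st b 0⟩}

def rank (x : Instr) : ℕ :=
  if x.proc = 0 then x.idx
  else
    match x.op with
    | .ld _ => x.proc + 1
    | _ => x.proc + 3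

def readsFrom (a b : ℕ) (S L : Instr) : Prop :=
  S ∈ instrs a b ∧ L ∈ instrs a b ∧ S.proc = 0 ∧ ∃ c, L.op = .ld c ∧ S.op = .st c 0

variable {a b : ℕ}

lemma rank_injOn : Set.InjOn rank (instrs a b) := by
  rintro x hx y hy h
  simp only [instrs, Set.mem_insert_iff, Set.mem_singleton_iff] at hx hy
  rcases hx with rfl | rfl | rfl | rfl | rfl | rfl <;>
    rcases hy with rfl | rfl | rfl | rfl | rfl | rfl <;> simp_all [rank]

lemma rank_lt_of_po {x y : Instr} (hx : x ∈ instrs a b) (hy : y ∈ instrs a b) (hpo : po x y)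
    (hord : ordTable x.op y.op) : rank x < rank y := by
  simp only [instrs, Set.mem_insert_iff, Set.mem_singleton_iff] at hx hy
  rcases hx with rfl | rfl | rfl | rfl | rfl | rfl <;>
    rcases hy with rfl | rfl | rfl | rfl | rfl | rfl <;> simp_all [po, ordTable, rank]

lemma rank_init_lt_load {x y : Instr} (hx : x ∈ instrs a b) (hy : y ∈ instrs a b)
    (hx0 : x.proc = 0) {c : ℕ} (hyc : y.op = .ld c) : rank x < rank y := by
  simp only [instrs, Set.mem_insert_iff, Set.mem_singleton_iff] at hx hy
  rcases hx with rfl | rfl | rfl | rfl | rfl | rfl <;>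
    rcases hy with rfl | rfl | rfl | rfl | rfl | rfl <;> simp_all [rank]

lemma proc_eq_zero_of_visible (hab : a ≠ b) {x y : Instr} (hx : x ∈ instrs a b)
    (hy : y ∈ instrs a b) {c : ℕ} (hxc : isStoreTo c x) (hyc : y.op = .ld c)
    (hvis : rank x < rank y ∨ po x y) : x.proc = 0 := by
  simp only [instrs, Set.mem_insert_iff, Set.mem_singleton_iff] at hx hy
  rcases hx with rfl | rfl | rfl | rfl | rfl | rfl <;>
    rcases hy with rfl | rfl | rfl | rfl | rfl | rfl <;> simp_all [isStoreTo, rank, po]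

lemma eq_of_init_store (hab : a ≠ b) {x y : Instr} (hx : x ∈ instrs a b) (hy : y ∈ instrs a b)
    (hx0 : x.proc = 0) (hy0 : y.proc = 0) {c : ℕ} (hxc : isStoreTo c x) (hyc : isStoreTo c y) :
    x = y := by
  simp only [instrs, Set.mem_insert_iff, Set.mem_singleton_iff] at hx hy
  rcases hx with rfl | rfl | rfl | rfl | rfl | rfl <;>
    rcases hy with rfl | rfl | rfl | rfl | rfl | rfl <;> simp_all [isStoreTo]

lemma readsFrom_ldVal (hab : a ≠ b) {S L : Instr} {c : ℕ} (h : readsFrom a b S L)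
    (hL : L.op = .ld c) :
    isStoreTo c S ∧ (rank S < rank L ∨ po S L) ∧
      ∀ S' ∈ instrs a b, isStoreTo c S' → (rank S' < rank L ∨ po S' L) →
        S' = S ∨ rank S' < rank S := by
  obtain ⟨hS, hLmem, hS0, c', hLc', hSc'⟩ := h
  obtain rfl : c' = c := IOp.ld.inj (hLc'.symm.trans hL)
  have hSc : isStoreTo c' S := ⟨0, hSc'⟩
  refine ⟨hSc, .inl (rank_init_lt_load hS hLmem hS0 hL), fun S' hS' hS'c hvis => .inl ?_⟩
  exact eq_of_init_store hab hS' hS (proc_eq_zero_of_visible hab hS' hLmem hS'c hL hvis) hS0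
    hS'c hSc

def execution (hab : a ≠ b) : WMMAx where
  I := instrs a b
  mo x y := rank x < rank y
  rf := readsFrom a b
  mo_irrefl _ := lt_irrefl _
  mo_trans := lt_trans
  mo_total _ hx _ hy hxy := lt_or_gt_of_ne (rank_injOn.ne hx hy hxy)
  instOrder _ hx _ hy := rank_lt_of_po hx hy
  rf_mem h := ⟨h.1, h.2.1⟩
  ldVal := readsFrom_ldVal hab

lemma rank_initA_lt {x : Instr} (hx : x ∈ instrs a b) (hne : x ≠ ⟨0, 0, .st a 0⟩) :
    rank ⟨0, 0, .st a 0⟩ < rank x :=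
  Nat.pos_of_ne_zero fun h => hne (rank_injOn hx (by simp [instrs]) h)

lemma rank_initB_lt (hab : a ≠ b) {x : Instr} (hx : x ∈ instrs a b)
    (hxb : isStoreTo b x ∨ isLoadOf b x) (hne : x ≠ ⟨0, 1, .st b 0⟩) :
    rank ⟨0, 1, .st b 0⟩ < rank x := by
  have h1 : rank x ≠ 1 := fun h => hne (rank_injOn hx (by simp [instrs]) h)
  have h0 : rank x ≠ 0 := by
    intro h
    obtain rfl : x = ⟨0, 0, .st a 0⟩ := rank_injOn hx (by simp [instrs]) h
    simp [isStoreTo, isLoadOf, hab] at hxb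
  change 1 < rank x
  omega

end SB

/-- The SB litmus test behavior is allowed in WMM: there exists an
execution satisfying the WMM axioms of P1: St a 1; r1 = Ld b and
P2: St b 1; r2 = Ld a (a ≠ b, memory initialized to 0) with r1 = 0 and
r2 = 0 (each load reads an initialization store of value 0). -/
theorem wmm_SB_allowed (a b : ℕ) (hab : a ≠ b) :
    ∃ (E : WMMAx) (S1 L1 S2 L2 Ia Ib SL1 SL2 : Instr),
      S1 = ⟨1, 0, IOp.st a 1⟩ ∧ L1 = ⟨1, 1, IOp.ld b⟩ ∧
      S2 = ⟨2, 0, IOp.st b 1⟩ ∧ L2 = ⟨2, 1, IOp.ld a⟩ ∧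
      Ia = ⟨0, 0, IOp.st a 0⟩ ∧ Ib = ⟨0, 1, IOp.st b 0⟩ ∧
      E.I = {S1, L1, S2, L2, Ia, Ib} ∧
      (∀ x ∈ E.I, (isStoreTo a x ∨ isLoadOf a x) → x ≠ Ia → E.mo Ia x) ∧
      (∀ x ∈ E.I, (isStoreTo b x ∨ isLoadOf b x) → x ≠ Ib → E.mo Ib x) ∧
      E.rf SL1 L1 ∧ SL1.op = IOp.st b 0 ∧
      E.rf SL2 L2 ∧ SL2.op = IOp.st a 0 := by
  refine ⟨SB.execution hab, _, _, _, _, _, _, ⟨0, 1, .st b 0⟩, ⟨0, 0, .st a 0⟩,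
    rfl, rfl, rfl, rfl, rfl, rfl, rfl, fun _ hx _ hne => SB.rank_initA_lt hx hne,
    fun _ hx hxb hne => SB.rank_initB_lt hab hx hxb hne, ?_, rfl, ?_, rfl⟩ <;>
    simp [SB.execution, SB.readsFrom, SB.instrs]
end

section
/- In the WMM axiomatic model, inserting a Commit fence followed by a Reconcile fence between the store and the load on each processor of the SB litmus test forbids the non-SC outcome: for the program P1: St a 1; Commit; Reconcile; r1 = Ld b and P2: St b 1; Commit; Reconcile; r2 = Ld a (a ≠ b, initialized to 0), no execution satisfying the WMM axioms yields r1 = 0 and r2 = 0. -/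
/-- With a Commit followed by a Reconcile between the store and
the load on each processor of SB (P1: St a 1; Commit; Reconcile; r1 = Ld b and
P2: St b 1; Commit; Reconcile; r2 = Ld a, a ≠ b, initialized to 0), no WMM
execution yields r1 = 0 and r2 = 0. -/
theorem wmm_SB_with_fences_forbidden (a b r1 r2 : ℕ) (hab : a ≠ b) (E : WMMAx)
    (S1 C1 R1 L1 S2 C2 R2 L2 Ia Ib SL1 SL2 : Instr)
    (hS1 : S1 = ⟨1, 0, IOp.st a 1⟩) (hC1 : C1 = ⟨1, 1, IOp.commit⟩)
    (hR1 : R1 = ⟨1, 2, IOp.reconcile⟩) (hL1 : L1 = ⟨1, 3, IOp.ld b⟩)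
    (hS2 : S2 = ⟨2, 0, IOp.st b 1⟩) (hC2 : C2 = ⟨2, 1, IOp.commit⟩)
    (hR2 : R2 = ⟨2, 2, IOp.reconcile⟩) (hL2 : L2 = ⟨2, 3, IOp.ld a⟩)
    (hIa : Ia = ⟨0, 0, IOp.st a 0⟩) (hIb : Ib = ⟨0, 1, IOp.st b 0⟩)
    (hI : E.I = {S1, C1, R1, L1, S2, C2, R2, L2, Ia, Ib})
    (hminA : ∀ x ∈ E.I, (isStoreTo a x ∨ isLoadOf a x) → x ≠ Ia → E.mo Ia x)
    (hminB : ∀ x ∈ E.I, (isStoreTo b x ∨ isLoadOf b x) → x ≠ Ib → E.mo Ib x)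
    (hrf1 : E.rf SL1 L1) (hv1 : SL1.op = IOp.st b r1)
    (hrf2 : E.rf SL2 L2) (hv2 : SL2.op = IOp.st a r2) :
    ¬ (r1 = 0 ∧ r2 = 0) := by
  rintro ⟨hr1, hr2⟩
  subst hr1 hr2 hS1 hC1 hR1 hL1 hS2 hC2 hR2 hL2 hIa hIb
  -- memberships
  have mS1 : (⟨1, 0, IOp.st a 1⟩ : Instr) ∈ E.I := by rw [hI]; simp
  have mC1 : (⟨1, 1, IOp.commit⟩ : Instr) ∈ E.I := by rw [hI]; simp
  have mR1 : (⟨1, 2, IOp.reconcile⟩ : Instr) ∈ E.I := by rw [hI]; simp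
  have mL1 : (⟨1, 3, IOp.ld b⟩ : Instr) ∈ E.I := by rw [hI]; simp
  have mS2 : (⟨2, 0, IOp.st b 1⟩ : Instr) ∈ E.I := by rw [hI]; simp
  have mC2 : (⟨2, 1, IOp.commit⟩ : Instr) ∈ E.I := by rw [hI]; simp
  have mR2 : (⟨2, 2, IOp.reconcile⟩ : Instr) ∈ E.I := by rw [hI]; simp
  have mL2 : (⟨2, 3, IOp.ld a⟩ : Instr) ∈ E.I := by rw [hI]; simp
  have mIa : (⟨0, 0, IOp.st a 0⟩ : Instr) ∈ E.I := by rw [hI]; simp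
  have mIb : (⟨0, 1, IOp.st b 0⟩ : Instr) ∈ E.I := by rw [hI]; simp
  -- fences: S1 <mo L1 and S2 <mo L2
  have moS1L1 : E.mo ⟨1, 0, IOp.st a 1⟩ ⟨1, 3, IOp.ld b⟩ := by
    have h1 := E.instOrder _ mS1 _ mC1 ⟨rfl, by norm_num⟩ (by trivial)
    have h2 := E.instOrder _ mC1 _ mR1 ⟨rfl, by norm_num⟩ (by trivial)
    have h3 := E.instOrder _ mR1 _ mL1 ⟨rfl, by norm_num⟩ (by trivial)
    exact E.mo_trans (E.mo_trans h1 h2) h3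
  have moS2L2 : E.mo ⟨2, 0, IOp.st b 1⟩ ⟨2, 3, IOp.ld a⟩ := by
    have h1 := E.instOrder _ mS2 _ mC2 ⟨rfl, by norm_num⟩ (by trivial)
    have h2 := E.instOrder _ mC2 _ mR2 ⟨rfl, by norm_num⟩ (by trivial)
    have h3 := E.instOrder _ mR2 _ mL2 ⟨rfl, by norm_num⟩ (by trivial)
    exact E.mo_trans (E.mo_trans h1 h2) h3
  -- SL1 = Ib, SL2 = Ia
  have hSL1I : SL1 ∈ E.I := (E.rf_mem hrf1).1
  have hSL2I : SL2 ∈ E.I := (E.rf_mem hrf2).1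
  rw [hI] at hSL1I hSL2I
  have hSL1 : SL1 = ⟨0, 1, IOp.st b 0⟩ := by
    simp only [Set.mem_insert_iff, Set.mem_singleton_iff] at hSL1I
    rcases hSL1I with h|h|h|h|h|h|h|h|h|h <;> subst h
    · injection hv1 with h1 h2; exact absurd h1 hab
    · exact IOp.noConfusion hv1
    · exact IOp.noConfusion hv1
    · exact IOp.noConfusion hv1
    · injection hv1 with h1 h2; exact absurd h2 one_ne_zero
    · exact IOp.noConfusion hv1
    · exact IOp.noConfusion hv1
    · exact IOp.noConfusion hv1
    · injection hv1 with h1 h2; exact absurd h1 hab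
    · rfl
  have hSL2 : SL2 = ⟨0, 0, IOp.st a 0⟩ := by
    simp only [Set.mem_insert_iff, Set.mem_singleton_iff] at hSL2I
    rcases hSL2I with h|h|h|h|h|h|h|h|h|h <;> subst h
    · injection hv2 with h1 h2; exact absurd h2 one_ne_zero
    · exact IOp.noConfusion hv2
    · exact IOp.noConfusion hv2
    · exact IOp.noConfusion hv2
    · injection hv2 with h1 h2; exact absurd h1.symm hab
    · exact IOp.noConfusion hv2
    · exact IOp.noConfusion hv2
    · exact IOp.noConfusion hv2
    · rfl
    · injection hv2 with h1 h2; exact absurd h1.symm hab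
  subst hSL1 hSL2
  -- initialization stores are mo-minimal
  have moIbS2 : E.mo ⟨0, 1, IOp.st b 0⟩ ⟨2, 0, IOp.st b 1⟩ :=
    hminB _ mS2 (Or.inl ⟨1, rfl⟩) (by simp)
  have moIaS1 : E.mo ⟨0, 0, IOp.st a 0⟩ ⟨1, 0, IOp.st a 1⟩ :=
    hminA _ mS1 (Or.inl ⟨1, rfl⟩) (by simp)
  -- ¬ mo S2 L1
  have hmax1 := (E.ldVal hrf1 rfl).2.2
  have hnS2L1 : ¬ E.mo ⟨2, 0, IOp.st b 1⟩ ⟨1, 3, IOp.ld b⟩ := by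
    intro h
    rcases hmax1 _ mS2 ⟨1, rfl⟩ (Or.inl h) with heq | hmo
    · simp at heq
    · exact E.mo_irrefl _ (E.mo_trans hmo moIbS2)
  have hmax2 := (E.ldVal hrf2 rfl).2.2
  have hnS1L2 : ¬ E.mo ⟨1, 0, IOp.st a 1⟩ ⟨2, 3, IOp.ld a⟩ := by
    intro h
    rcases hmax2 _ mS1 ⟨1, rfl⟩ (Or.inl h) with heq | hmo
    · simp at heq
    · exact E.mo_irrefl _ (E.mo_trans hmo moIaS1)
  -- totality
  have moL1S2 : E.mo ⟨1, 3, IOp.ld b⟩ ⟨2, 0, IOp.st b 1⟩ := by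
    rcases E.mo_total _ mS2 _ mL1 (by simp) with h | h
    · exact absurd h hnS2L1
    · exact h
  have moL2S1 : E.mo ⟨2, 3, IOp.ld a⟩ ⟨1, 0, IOp.st a 1⟩ := by
    rcases E.mo_total _ mS1 _ mL2 (by simp) with h | h
    · exact absurd h hnS1L2
    · exact h
  exact E.mo_irrefl _ (E.mo_trans (E.mo_trans (E.mo_trans moS1L1 moL1S2) moS2L2) moL2S1)
end

section
/- In the WMM axiomatic model, the MP litmus test with a Commit fence on the producer and a Reconcile fence on the consumer forbids the reordering outcome: for P1: St a 1; Commit; St b 1 and P2: r1 = Ld b; Reconcile; r2 = Ld a (a ≠ b, initialized to 0), no execution satisfying the WMM axioms yields r1 = 1 and r2 = 0. -/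
/-- MP with a Commit fence on the producer and a Reconcile fence
on the consumer forbids the reordering outcome: for P1: St a 1; Commit; St b 1
and P2: r1 = Ld b; Reconcile; r2 = Ld a (a ≠ b, initialized to 0), no WMM
execution yields r1 = 1 and r2 = 0. -/
theorem wmm_MP_with_fences_forbidden (a b r1 r2 : ℕ) (hab : a ≠ b) (E : WMMAx)
    (S1 C1 S2 L1 R1 L2 Ia Ib SL1 SL2 : Instr)
    (hS1 : S1 = ⟨1, 0, IOp.st a 1⟩) (hC1 : C1 = ⟨1, 1, IOp.commit⟩)
    (hS2 : S2 = ⟨1, 2, IOp.st b 1⟩)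
    (hL1 : L1 = ⟨2, 0, IOp.ld b⟩) (hR1 : R1 = ⟨2, 1, IOp.reconcile⟩)
    (hL2 : L2 = ⟨2, 2, IOp.ld a⟩)
    (hIa : Ia = ⟨0, 0, IOp.st a 0⟩) (hIb : Ib = ⟨0, 1, IOp.st b 0⟩)
    (hI : E.I = {S1, C1, S2, L1, R1, L2, Ia, Ib})
    (hminA : ∀ x ∈ E.I, (isStoreTo a x ∨ isLoadOf a x) → x ≠ Ia → E.mo Ia x)
    (hminB : ∀ x ∈ E.I, (isStoreTo b x ∨ isLoadOf b x) → x ≠ Ib → E.mo Ib x)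
    (hrf1 : E.rf SL1 L1) (hv1 : SL1.op = IOp.st b r1)
    (hrf2 : E.rf SL2 L2) (hv2 : SL2.op = IOp.st a r2) :
    ¬ (r1 = 1 ∧ r2 = 0) := by
  rintro ⟨hr1, hr2⟩
  subst hr1 hr2
  have mS1 : S1 ∈ E.I := by rw [hI]; simp
  have mC1 : C1 ∈ E.I := by rw [hI]; simp
  have mS2 : S2 ∈ E.I := by rw [hI]; simp
  have mL1 : L1 ∈ E.I := by rw [hI]; simp
  have mR1 : R1 ∈ E.I := by rw [hI]; simp
  have mL2 : L2 ∈ E.I := by rw [hI]; simp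
  -- identify SL1 = S2
  have mSL1 : SL1 ∈ E.I := (E.rf_mem hrf1).1
  rw [hI] at mSL1
  simp only [Set.mem_insert_iff, Set.mem_singleton_iff] at mSL1
  have hSL1 : SL1 = S2 := by
    rcases mSL1 with h|h|h|h|h|h|h|h
    · rw [h, hS1] at hv1; exact absurd (IOp.st.injEq .. |>.mp hv1).1 hab
    · rw [h, hC1] at hv1; exact absurd hv1 (by simp)
    · exact h
    · rw [h, hL1] at hv1; exact absurd hv1 (by simp)
    · rw [h, hR1] at hv1; exact absurd hv1 (by simp)
    · rw [h, hL2] at hv1; exact absurd hv1 (by simp)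
    · rw [h, hIa] at hv1; exact absurd (IOp.st.injEq .. |>.mp hv1).1 hab
    · rw [h, hIb] at hv1
      exact absurd (IOp.st.injEq .. |>.mp hv1).2 (by norm_num)
  -- identify SL2 = Ia
  have mSL2 : SL2 ∈ E.I := (E.rf_mem hrf2).1
  rw [hI] at mSL2
  simp only [Set.mem_insert_iff, Set.mem_singleton_iff] at mSL2
  have hSL2 : SL2 = Ia := by
    rcases mSL2 with h|h|h|h|h|h|h|h
    · rw [h, hS1] at hv2
      exact absurd (IOp.st.injEq .. |>.mp hv2).2 (by norm_num)
    · rw [h, hC1] at hv2; exact absurd hv2 (by simp)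
    · rw [h, hS2] at hv2; exact absurd (IOp.st.injEq .. |>.mp hv2).1 (Ne.symm hab)
    · rw [h, hL1] at hv2; exact absurd hv2 (by simp)
    · rw [h, hR1] at hv2; exact absurd hv2 (by simp)
    · rw [h, hL2] at hv2; exact absurd hv2 (by simp)
    · exact h
    · rw [h, hIb] at hv2; exact absurd (IOp.st.injEq .. |>.mp hv2).1 (Ne.symm hab)
  -- mo edges from instOrder
  have h1 : E.mo S1 C1 :=
    E.instOrder S1 mS1 C1 mC1 (by rw [hS1, hC1]; exact ⟨rfl, by norm_num⟩)
      (by rw [hS1, hC1]; trivial)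
  have h2 : E.mo C1 S2 :=
    E.instOrder C1 mC1 S2 mS2 (by rw [hS2, hC1]; exact ⟨rfl, by norm_num⟩)
      (by rw [hS2, hC1]; trivial)
  have h3 : E.mo L1 R1 :=
    E.instOrder L1 mL1 R1 mR1 (by rw [hL1, hR1]; exact ⟨rfl, by norm_num⟩)
      (by rw [hL1, hR1]; trivial)
  have h4 : E.mo R1 L2 :=
    E.instOrder R1 mR1 L2 mL2 (by rw [hL2, hR1]; exact ⟨rfl, by norm_num⟩)
      (by rw [hL2, hR1]; trivial)
  -- mo S2 L1 from rf1 via ldVal (po impossible across procs)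
  rw [hSL1] at hrf1
  rw [hSL2] at hrf2
  have hld1 := E.ldVal hrf1 (show L1.op = IOp.ld b by rw [hL1])
  have h5 : E.mo S2 L1 := by
    rcases hld1.2.1 with h | h
    · exact h
    · rw [hS2, hL1] at h; exact absurd h.1 (by norm_num)
  have hmoS1L2 : E.mo S1 L2 :=
    E.mo_trans (E.mo_trans (E.mo_trans (E.mo_trans h1 h2) h5) h3) h4
  -- ldVal for L2: S1 is a store to a mo-before L2
  have hld2 := E.ldVal hrf2 (show L2.op = IOp.ld a by rw [hL2])
  have hmax := hld2.2.2 S1 mS1 ⟨1, by rw [hS1]⟩ (Or.inl hmoS1L2)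
  have hne : S1 ≠ Ia := by rw [hS1, hIa]; simp
  rcases hmax with h | h
  · exact hne h
  · have hIaS1 : E.mo Ia S1 := hminA S1 mS1 (Or.inl ⟨1, by rw [hS1]⟩) hne
    exact E.mo_irrefl S1 (E.mo_trans h hIaS1)
end

section
/- In the WMM axiomatic model, stores are multi-copy atomic: in the WRC litmus test with Reconcile fences—P1: St a 2; P2: r1 = Ld a; Reconcile; St b (r1 - 1); P3: r2 = Ld b; Reconcile; r3 = Ld a (a ≠ b, initialized to 0)—no execution satisfying the WMM axioms yields r1 = 2, r2 = 1, r3 = 0. -/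
/-- Multi-copy atomicity of WMM stores: in WRC with Reconcile
fences — P1: St a 2; P2: r1 = Ld a; Reconcile; St b (r1 - 1);
P3: r2 = Ld b; Reconcile; r3 = Ld a (a ≠ b, initialized to 0) — no WMM
execution yields r1 = 2, r2 = 1, r3 = 0. -/
theorem wmm_WRC_forbidden (a b r1 r2 r3 : ℕ) (hab : a ≠ b) (E : WMMAx)
    (S1 L1 F1 S2 L2 F2 L3 Ia Ib SL1 SL2 SL3 : Instr)
    (hS1 : S1 = ⟨1, 0, IOp.st a 2⟩)
    (hL1 : L1 = ⟨2, 0, IOp.ld a⟩) (hF1 : F1 = ⟨2, 1, IOp.reconcile⟩)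
    (hS2 : S2 = ⟨2, 2, IOp.st b (r1 - 1)⟩)
    (hL2 : L2 = ⟨3, 0, IOp.ld b⟩) (hF2 : F2 = ⟨3, 1, IOp.reconcile⟩)
    (hL3 : L3 = ⟨3, 2, IOp.ld a⟩)
    (hIa : Ia = ⟨0, 0, IOp.st a 0⟩) (hIb : Ib = ⟨0, 1, IOp.st b 0⟩)
    (hI : E.I = {S1, L1, F1, S2, L2, F2, L3, Ia, Ib})
    (hminA : ∀ x ∈ E.I, (isStoreTo a x ∨ isLoadOf a x) → x ≠ Ia → E.mo Ia x)
    (hminB : ∀ x ∈ E.I, (isStoreTo b x ∨ isLoadOf b x) → x ≠ Ib → E.mo Ib x)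
    (hrf1 : E.rf SL1 L1) (hv1 : SL1.op = IOp.st a r1)
    (hrf2 : E.rf SL2 L2) (hv2 : SL2.op = IOp.st b r2)
    (hrf3 : E.rf SL3 L3) (hv3 : SL3.op = IOp.st a r3) :
    ¬ (r1 = 2 ∧ r2 = 1 ∧ r3 = 0) := by

  rintro ⟨hr1, hr2, hr3⟩
  subst hr1 hr2 hr3
  subst hS1 hL1 hF1 hS2 hL2 hF2 hL3 hIa hIb
  -- identify the rf sources
  obtain ⟨hSL1I, hL1I⟩ := E.rf_mem hrf1
  obtain ⟨hSL2I, hL2I⟩ := E.rf_mem hrf2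
  obtain ⟨hSL3I, hL3I⟩ := E.rf_mem hrf3
  rw [hI] at hSL1I hSL2I hSL3I
  simp only [Set.mem_insert_iff, Set.mem_singleton_iff] at hSL1I hSL2I hSL3I
  have hSL1 : SL1 = ⟨1, 0, IOp.st a 2⟩ := by
    rcases hSL1I with h|h|h|h|h|h|h|h|h <;> subst h <;>
      first
        | rfl
        | (simp only [Instr.mk.injEq] at hv1 ⊢; simp at hv1 <;>
            first | exact hab hv1.1 | exact hab hv1.1.symm)
  have hSL2 : SL2 = ⟨2, 2, IOp.st b 1⟩ := by
    rcases hSL2I with h|h|h|h|h|h|h|h|h <;> subst h <;>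
      first
        | rfl
        | (simp only [Instr.mk.injEq] at hv2 ⊢; simp at hv2 <;>
            first | exact hab hv2.1 | exact hab hv2.1.symm)
  have hSL3 : SL3 = ⟨0, 0, IOp.st a 0⟩ := by
    rcases hSL3I with h|h|h|h|h|h|h|h|h <;> subst h <;>
      first
        | rfl
        | (simp only [Instr.mk.injEq] at hv3 ⊢; simp at hv3 <;>
            first | exact hab hv3.1 | exact hab hv3.1.symm | exact (hab hv3).elim | exact (hab hv3.symm).elim)
  subst hSL1 hSL2 hSL3
  -- memberships
  have mS1 : (⟨1, 0, IOp.st a 2⟩ : Instr) ∈ E.I := by rw [hI]; simp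
  have mL1 : (⟨2, 0, IOp.ld a⟩ : Instr) ∈ E.I := by rw [hI]; simp
  have mF1 : (⟨2, 1, IOp.reconcile⟩ : Instr) ∈ E.I := by rw [hI]; simp
  have mS2 : (⟨2, 2, IOp.st b 1⟩ : Instr) ∈ E.I := by rw [hI]; simp
  have mL2 : (⟨3, 0, IOp.ld b⟩ : Instr) ∈ E.I := by rw [hI]; simp
  have mF2 : (⟨3, 1, IOp.reconcile⟩ : Instr) ∈ E.I := by rw [hI]; simp
  have mL3 : (⟨3, 2, IOp.ld a⟩ : Instr) ∈ E.I := by rw [hI]; simp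
  have mIa : (⟨0, 0, IOp.st a 0⟩ : Instr) ∈ E.I := by rw [hI]; simp
  -- mo S1 L1
  have h1 : E.mo ⟨1, 0, IOp.st a 2⟩ ⟨2, 0, IOp.ld a⟩ := by
    rcases (E.ldVal hrf1 rfl).2.1 with h | h
    · exact h
    · exact absurd h.1 (by norm_num)
  have h2 : E.mo ⟨2, 0, IOp.ld a⟩ ⟨2, 1, IOp.reconcile⟩ :=
    E.instOrder _ mL1 _ mF1 ⟨rfl, by norm_num⟩ trivial
  have h3 : E.mo ⟨2, 1, IOp.reconcile⟩ ⟨2, 2, IOp.st b 1⟩ :=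
    E.instOrder _ mF1 _ mS2 ⟨rfl, by norm_num⟩ trivial
  have h4 : E.mo ⟨2, 2, IOp.st b 1⟩ ⟨3, 0, IOp.ld b⟩ := by
    rcases (E.ldVal hrf2 rfl).2.1 with h | h
    · exact h
    · exact absurd h.1 (by norm_num)
  have h5 : E.mo ⟨3, 0, IOp.ld b⟩ ⟨3, 1, IOp.reconcile⟩ :=
    E.instOrder _ mL2 _ mF2 ⟨rfl, by norm_num⟩ trivial
  have h6 : E.mo ⟨3, 1, IOp.reconcile⟩ ⟨3, 2, IOp.ld a⟩ :=
    E.instOrder _ mF2 _ mL3 ⟨rfl, by norm_num⟩ trivial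
  have hchain : E.mo ⟨1, 0, IOp.st a 2⟩ ⟨3, 2, IOp.ld a⟩ :=
    E.mo_trans h1 (E.mo_trans h2 (E.mo_trans h3 (E.mo_trans h4 (E.mo_trans h5 h6))))
  have hmax := (E.ldVal hrf3 rfl).2.2 _ mS1 ⟨2, rfl⟩ (Or.inl hchain)
  rcases hmax with h | h
  · exact absurd (congrArg Instr.proc h) (by norm_num)
  · have := hminA _ mS1 (Or.inl ⟨2, rfl⟩) (by intro hh; exact absurd (congrArg Instr.proc hh) (by norm_num))
    exact E.mo_irrefl _ (E.mo_trans h this)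
end

section
/- The WMM I²E abstract machine preserves the following invariant under all its operations: for each processor, each address is never simultaneously present in both its store buffer sb and its invalidation buffer ib. -/
/-- A buffer of (address, value) pairs; the head of the list is the newest
entry. -/
abbrev Buf := List (ℕ × ℕ)

/-- The buffer contains an entry for address `a`. -/
def hasAddr (l : Buf) (a : ℕ) : Prop := a ∈ l.map Prod.fst

instance (l : Buf) (a : ℕ) : Decidable (hasAddr l a) :=
  inferInstanceAs (Decidable (a ∈ l.map Prod.fst))

/-- Remove all entries for address `a`. -/
def remAddr (l : Buf) (a : ℕ) : Buf := l.filter (fun e => e.1 ≠ a)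

/-- State of the WMM I²E abstract machine: atomic memory, per-processor store
buffers `sb` and invalidation buffers `ib`. -/
structure WSt where
  mem : ℕ → ℕ
  sb : ℕ → Buf
  ib : ℕ → Buf

/-- Operations of the WMM I²E abstract machine. -/
inductive WStep : WSt → WSt → Prop
  /-- WMM-St: insert the store into the local `sb`, purge the address from the
  local `ib`. -/
  | store (s : WSt) (i a v : ℕ) :
      WStep s { mem := s.mem,
                sb := Function.update s.sb i ((a, v) :: s.sb i),
                ib := Function.update s.ib i (remAddr (s.ib i) a) }
  /-- WMM-Ld reading the youngest local `sb` entry for the address. -/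
  | ldSb (s : WSt) (i a : ℕ) (h : hasAddr (s.sb i) a) : WStep s s
  /-- WMM-Ld reading the atomic memory: all stale values for the address are
  removed from the local `ib`. -/
  | ldMem (s : WSt) (i a : ℕ) (h : ¬ hasAddr (s.sb i) a) :
      WStep s { s with ib := Function.update s.ib i (remAddr (s.ib i) a) }
  /-- WMM-Ld reading a stale value from the local `ib`: all staler values for
  the address are removed. -/
  | ldIb (s : WSt) (i a v : ℕ) (l1 l2 : Buf)
      (h : ¬ hasAddr (s.sb i) a) (hib : s.ib i = l1 ++ (a, v) :: l2) :
      WStep s { s with ib := Function.update s.ib i (l1 ++ (a, v) :: remAddr l2 a) }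
  /-- WMM-Com: a Commit executes only when the local `sb` is empty. -/
  | commit (s : WSt) (i : ℕ) (h : s.sb i = []) : WStep s s
  /-- WMM-Rec: a Reconcile clears the local `ib`. -/
  | reconcile (s : WSt) (i : ℕ) :
      WStep s { s with ib := Function.update s.ib i [] }
  /-- WMM-DeqSb: dequeue the oldest store for some address from a store
  buffer, update the atomic memory, and insert the overwritten stale value
  into the `ib` of every other processor whose `sb` does not contain the
  address. -/
  | deqSb (s : WSt) (i a v : ℕ) (l1 l2 : Buf)
      (hsb : s.sb i = l1 ++ (a, v) :: l2) (hold : ¬ hasAddr l2 a) :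
      WStep s { mem := Function.update s.mem a v,
                sb := Function.update s.sb i (l1 ++ l2),
                ib := fun j => if j = i ∨ hasAddr (s.sb j) a then s.ib j
                               else (a, s.mem a) :: s.ib j }

/-- Initial state: all buffers empty. -/
def WInit (m0 : ℕ → ℕ) : WSt := { mem := m0, sb := fun _ => [], ib := fun _ => [] }

lemma hasAddr_remAddr_self (l : Buf) (a : ℕ) : ¬ hasAddr (remAddr l a) a := by
  intro h
  simp only [hasAddr, remAddr, List.mem_map] at h
  obtain ⟨⟨x, y⟩, hx, rfl⟩ := h
  have := List.of_mem_filter hx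
  simp at this

lemma hasAddr_remAddr_sub {l : Buf} {a b : ℕ} (h : hasAddr (remAddr l a) b) :
    hasAddr l b := by
  simp only [hasAddr, List.mem_map] at h ⊢
  obtain ⟨x, hx, hxb⟩ := h
  exact ⟨x, (List.mem_filter.1 hx).1, hxb⟩

def WInv (s : WSt) : Prop := ∀ i a, ¬ (hasAddr (s.sb i) a ∧ hasAddr (s.ib i) a)

lemma inv_step {s t : WSt} (hs : WInv s) (h : WStep s t) : WInv t := by
  cases h with
  | store i a v =>
      intro j b ⟨hsb, hib⟩
      by_cases hj : j = i
      · subst hj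
        simp only [Function.update_self] at hsb hib
        by_cases hba : b = a
        · subst hba; exact hasAddr_remAddr_self _ _ hib
        · have : hasAddr (s.sb j) b := by
            simp only [hasAddr, List.map_cons, List.mem_cons] at hsb
            rcases hsb with h1 | h1
            · exact absurd h1 hba
            · exact h1
          exact hs j b ⟨this, hasAddr_remAddr_sub hib⟩
      · simp only [Function.update_of_ne hj] at hsb hib
        exact hs j b ⟨hsb, hib⟩
  | ldSb i a h => exact hs
  | ldMem i a h =>
      intro j b ⟨hsb, hib⟩
      by_cases hj : j = i
      · subst hj
        simp only [Function.update_self] at hib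
        exact hs j b ⟨hsb, hasAddr_remAddr_sub hib⟩
      · simp only [Function.update_of_ne hj] at hib
        exact hs j b ⟨hsb, hib⟩
  | ldIb i a v l1 l2 h hib' =>
      intro j b ⟨hsb, hib⟩
      by_cases hj : j = i
      · subst hj
        simp only [Function.update_self] at hib
        refine hs j b ⟨hsb, ?_⟩
        rw [hib']
        simp only [hasAddr, List.map_append, List.mem_append, List.map_cons,
          List.mem_cons] at hib ⊢
        rcases hib with h1 | h1 | h1
        · exact Or.inl h1
        · exact Or.inr (Or.inl h1)
        · exact Or.inr (Or.inr (hasAddr_remAddr_sub h1))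
      · simp only [Function.update_of_ne hj] at hib
        exact hs j b ⟨hsb, hib⟩
  | commit i h => exact hs
  | reconcile i =>
      intro j b ⟨hsb, hib⟩
      by_cases hj : j = i
      · subst hj; simp [hasAddr, Function.update_self] at hib
      · simp only [Function.update_of_ne hj] at hib
        exact hs j b ⟨hsb, hib⟩
  | deqSb i a v l1 l2 hsb' hold =>
      intro j b ⟨hsb, hib⟩
      simp only at hsb hib
      by_cases hj : j = i
      · subst hj
        simp only [Function.update_self] at hsb
        rw [if_pos (Or.inl rfl)] at hib
        refine hs j b ⟨?_, hib⟩
        rw [hsb']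
        simp only [hasAddr, List.map_append, List.mem_append, List.map_cons,
          List.mem_cons] at hsb ⊢
        tauto
      · simp only [Function.update_of_ne hj] at hsb
        by_cases hc : j = i ∨ hasAddr (s.sb j) a
        · rw [if_pos hc] at hib
          exact hs j b ⟨hsb, hib⟩
        · rw [if_neg hc] at hib
          push_neg at hc
          simp only [hasAddr, List.map_cons, List.mem_cons] at hib
          rcases hib with h1 | h1
          · subst h1; exact hc.2 hsb
          · exact hs j b ⟨hsb, h1⟩

/-- in every reachable state of the WMM I²E machine, no address is
simultaneously present in both the store buffer and the invalidation buffer of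
the same processor. -/
theorem wmm_sb_ib_disjoint (m0 : ℕ → ℕ) (s : WSt)
    (h : Relation.ReflTransGen WStep (WInit m0) s) :
    ∀ i a, ¬ (hasAddr (s.sb i) a ∧ hasAddr (s.ib i) a) := by
  have : WInv s := by
    induction h with
    | refl => intro i a ⟨_, hib⟩; simp [WInit, hasAddr] at hib
    | tail _ hstep ih => exact inv_step ih hstep
  exact this
end

section
/- The WMM I²E abstract machine enforces per-location SC on same-address load pairs: if a processor executes two loads L1 then L2 to the same address, and L1 reads the value of store S1 while L2 reads the value of store S2 with S1 ≠ S2, then S2 is not overwritten in the atomic memory before S1 is; equivalently, in the per-address total order in which stores update the atomic memory, S1 precedes or equals S2. -/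
/-!
Every store carries a fresh tag, and `t` precedes `t'` (`CoBefore`) when either `t` has updated
memory and `t'` does not do so before it, or both wait in one store buffer for the same address
with `t` older. Since store buffers drain in FIFO order per address, this relation survives every
step. The invariant is that a value once loaded by `i` at `a` equals or precedes every value `i`
can still load there: a store makes only its own, newest, value visible; a dequeue makes its
value visible only where the memory value it overwrites was; and a load from the invalidation
buffer discards everything staler. The second load returns a visible value, so the two stores
are related, and the relation persists to the end of the trace, where it orders their memory
updates.
-/

/-- A store-buffer / invalidation-buffer entry, tagged with the identity of
the store that produced it. -/
structure TEnt where
  tag : ℕ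
  addr : ℕ
  val : ℕ
  deriving DecidableEq

def hasA (l : List TEnt) (a : ℕ) : Prop := a ∈ l.map TEnt.addr

instance (l : List TEnt) (a : ℕ) : Decidable (hasA l a) :=
  inferInstanceAs (Decidable (a ∈ l.map TEnt.addr))

def remA (l : List TEnt) (a : ℕ) : List TEnt := l.filter (fun e => e.addr ≠ a)

/-- State of the (tag-instrumented) WMM I²E machine.  Buffers keep the newest
entry at the head; the atomic memory records, for each address, the tag of the
store whose value it holds together with that value; `next` generates fresh
store tags. -/
structure TSt where
  mem : ℕ → ℕ × ℕ
  sb : ℕ → List TEnt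
  ib : ℕ → List TEnt
  next : ℕ

/-- Observable labels: a load by processor `i` to address `a` returning the
value of the store with tag `t`, and the dequeue (memory update) of the store
with tag `t` to address `a`. -/
inductive TLab
  | load (i a t : ℕ)
  | deq (t a : ℕ)
  | tau
  deriving DecidableEq

inductive TStep : TSt → TLab → TSt → Prop
  | store (s : TSt) (i a v : ℕ) :
      TStep s .tau
        { mem := s.mem,
          sb := Function.update s.sb i (⟨s.next, a, v⟩ :: s.sb i),
          ib := Function.update s.ib i (remA (s.ib i) a),
          next := s.next + 1 }
  | ldSb (s : TSt) (i : ℕ) (e : TEnt) (l1 l2 : List TEnt)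
      (hsb : s.sb i = l1 ++ e :: l2) (hy : ¬ hasA l1 e.addr) :
      TStep s (.load i e.addr e.tag) s
  | ldMem (s : TSt) (i a : ℕ) (h : ¬ hasA (s.sb i) a) :
      TStep s (.load i a (s.mem a).1)
        { s with ib := Function.update s.ib i (remA (s.ib i) a) }
  | ldIb (s : TSt) (i : ℕ) (e : TEnt) (l1 l2 : List TEnt)
      (h : ¬ hasA (s.sb i) e.addr) (hib : s.ib i = l1 ++ e :: l2) :
      TStep s (.load i e.addr e.tag)
        { s with ib := Function.update s.ib i (l1 ++ e :: remA l2 e.addr) }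
  | commit (s : TSt) (i : ℕ) (h : s.sb i = []) : TStep s .tau s
  | reconcile (s : TSt) (i : ℕ) :
      TStep s .tau { s with ib := Function.update s.ib i [] }
  | deqSb (s : TSt) (i : ℕ) (e : TEnt) (l1 l2 : List TEnt)
      (hsb : s.sb i = l1 ++ e :: l2) (hold : ¬ hasA l2 e.addr) :
      TStep s (.deq e.tag e.addr)
        { mem := Function.update s.mem e.addr (e.tag, e.val),
          sb := Function.update s.sb i (l1 ++ l2),
          ib := fun j => if j = i ∨ hasA (s.sb j) e.addr then s.ib j
                         else ⟨(s.mem e.addr).1, e.addr, (s.mem e.addr).2⟩ :: s.ib j,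
          next := s.next }

/-- A trace of labeled steps. -/
inductive TSteps : TSt → List TLab → TSt → Prop
  | nil (s : TSt) : TSteps s [] s
  | cons {s1 s2 s3 : TSt} {l : TLab} {ls : List TLab} :
      TStep s1 l s2 → TSteps s2 ls s3 → TSteps s1 (l :: ls) s3

def TInit (m0 : ℕ → ℕ) : TSt :=
  { mem := fun a => (0, m0 a), sb := fun _ => [], ib := fun _ => [], next := 1 }

section Trace

variable {tr : List TLab} {x : TLab} {p q t t' u b : ℕ}

theorem getElem?_snoc_eq_some {y : TLab} (h : (tr ++ [x])[p]? = some y) :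
    tr[p]? = some y ∨ (p = tr.length ∧ x = y) := by
  rcases lt_trichotomy p tr.length with hp | rfl | hp
  · exact Or.inl (by rwa [List.getElem?_append_left hp] at h)
  · exact Or.inr ⟨rfl, by simpa using h⟩
  · simp [List.getElem?_eq_none (by simp; omega : (tr ++ [x]).length ≤ p)] at h

def DeqAt (tr : List TLab) (q t : ℕ) : Prop := ∃ b, tr[q]? = some (.deq t b)

theorem DeqAt.lt_length (h : DeqAt tr q t) : q < tr.length :=
  let ⟨_, hb⟩ := h
  (List.getElem?_eq_some_iff.1 hb).1

theorem DeqAt.snoc (h : DeqAt tr q t) : DeqAt (tr ++ [x]) q t :=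
  let ⟨b, hb⟩ := h
  ⟨b, by rwa [List.getElem?_append_left h.lt_length]⟩

theorem DeqAt.of_snoc (h : DeqAt (tr ++ [x]) q t) :
    DeqAt tr q t ∨ (q = tr.length ∧ ∃ b, x = .deq t b) := by
  obtain ⟨b, hb⟩ := h
  exact (getElem?_snoc_eq_some hb).imp (fun h => ⟨b, h⟩) fun ⟨hq, hx⟩ => ⟨hq, b, hx⟩

theorem deqAt_snoc_length : DeqAt (tr ++ [.deq t b]) tr.length t :=
  ⟨b, List.getElem?_concat_length⟩

-- Tag `0` stands for the initial memory value.
def Landed (tr : List TLab) (t : ℕ) : Prop := t = 0 ∨ ∃ q, DeqAt tr q t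

def LandedBefore (tr : List TLab) (t t' : ℕ) : Prop :=
  t = 0 ∨ ∃ q, DeqAt tr q t ∧ ∀ q', DeqAt tr q' t' → q < q'

theorem Landed.snoc (h : Landed tr t) : Landed (tr ++ [x]) t :=
  h.imp_right fun ⟨q, hq⟩ => ⟨q, hq.snoc⟩

theorem LandedBefore.landed (h : LandedBefore tr t t') : Landed tr t :=
  h.imp_right fun ⟨q, hq, _⟩ => ⟨q, hq⟩

theorem LandedBefore.snoc (h : LandedBefore tr t t') : LandedBefore (tr ++ [x]) t t' := by
  refine h.imp_right fun ⟨q, hq, hafter⟩ => ⟨q, hq.snoc, fun q' hq' => ?_⟩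
  rcases hq'.of_snoc with hq' | ⟨rfl, -⟩
  exacts [hafter q' hq', hq.lt_length]

theorem LandedBefore.of_landed (h : Landed tr t) (h' : ∀ q, ¬ DeqAt tr q t') :
    LandedBefore tr t t' :=
  h.imp_right fun ⟨q, hq⟩ => ⟨q, hq, fun q' hq' => absurd hq' (h' q')⟩

theorem LandedBefore.snoc_deq (h : Landed tr t) (hu : ∀ q, ¬ DeqAt tr q u) :
    LandedBefore (tr ++ [.deq u b]) t u := by
  refine h.imp_right fun ⟨q, hq⟩ => ⟨q, hq.snoc, fun q' hq' => ?_⟩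
  rcases hq'.of_snoc with hq' | ⟨rfl, -⟩
  exacts [absurd hq' (hu q'), hq.lt_length]

end Trace

section Buffers

theorem List.sublist_pair_append_singleton {α : Type*} {y z w : α} {l : List α}
    (h : [y, z].Sublist (l ++ [w])) : [y, z].Sublist l ∨ (z = w ∧ y ∈ l) := by
  obtain ⟨l₁, l₂, hyz, h₁, h₂⟩ := List.sublist_append_iff.1 h
  match l₁, l₂, hyz with
  | [], _, rfl => simpa using h₂.length_le
  | [_], _, rfl => exact Or.inr ⟨by simpa using h₂, List.singleton_sublist.1 h₁⟩
  | [_, _], [], rfl => exact Or.inl h₁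

def tagsAt (l : List TEnt) (a : ℕ) : List ℕ := (l.filter (·.addr = a)).map TEnt.tag

variable {l l' : List TEnt} {e : TEnt} {a c : ℕ}

@[simp] theorem tagsAt_append : tagsAt (l ++ l') a = tagsAt l a ++ tagsAt l' a := by
  simp [tagsAt]

theorem tagsAt_cons :
    tagsAt (e :: l) a = if e.addr = a then e.tag :: tagsAt l a else tagsAt l a := by
  by_cases h : e.addr = a <;> simp [tagsAt, h]

theorem tagsAt_eq_nil_iff : tagsAt l a = [] ↔ ¬ hasA l a := by
  simp [tagsAt, hasA, List.filter_eq_nil_iff]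

theorem tagsAt_remA : tagsAt (remA l c) a = if a = c then [] else tagsAt l a := by
  split_ifs with h
  · simp [tagsAt, remA, List.filter_filter, h]
  · simp only [tagsAt, remA, List.filter_filter]
    congr 1
    refine List.filter_congr fun e _ => ?_
    by_cases he : e.addr = a <;> simp [he, h]

theorem List.Sublist.tagsAt (h : l.Sublist l') : (tagsAt l a).Sublist (tagsAt l' a) :=
  (h.filter _).map _

end Buffers

section Steps

def sbTags (s : TSt) (j a : ℕ) : List ℕ := tagsAt (s.sb j) a

def ibTags (s : TSt) (j a : ℕ) : List ℕ := tagsAt (s.ib j) a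

def Visible (s : TSt) (i a t : ℕ) : Prop :=
  (sbTags s i a).head? = some t ∨ (sbTags s i a = [] ∧ (t = (s.mem a).1 ∨ t ∈ ibTags s i a))

def TSt.store (s : TSt) (i a v : ℕ) : TSt :=
  { mem := s.mem,
    sb := Function.update s.sb i (⟨s.next, a, v⟩ :: s.sb i),
    ib := Function.update s.ib i (remA (s.ib i) a),
    next := s.next + 1 }

def TSt.dequeue (s : TSt) (i : ℕ) (e : TEnt) (rest : List TEnt) : TSt :=
  { mem := Function.update s.mem e.addr (e.tag, e.val),
    sb := Function.update s.sb i rest,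
    ib := fun j => if j = i ∨ hasA (s.sb j) e.addr then s.ib j
                   else ⟨(s.mem e.addr).1, e.addr, (s.mem e.addr).2⟩ :: s.ib j,
    next := s.next }

-- The loads, `commit` and `reconcile` are the quiet steps.
structure Quiet (s s' : TSt) : Prop where
  mem_eq : s'.mem = s.mem
  sb_eq : s'.sb = s.sb
  next_eq : s'.next = s.next
  ib_sublist : ∀ j, (s'.ib j).Sublist (s.ib j)

variable {s s' : TSt} {x : TLab} {i j a c t v : ℕ}

theorem TStep.quiet_or_store_or_dequeue (h : TStep s x s') :
    (Quiet s s' ∧ ∀ t b, x ≠ .deq t b) ∨ (∃ i a v, x = .tau ∧ s' = s.store i a v) ∨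
      ∃ i e l1 l2, s.sb i = l1 ++ e :: l2 ∧ ¬ hasA l2 e.addr ∧
        x = .deq e.tag e.addr ∧ s' = s.dequeue i e (l1 ++ l2) := by
  have update_sublist : ∀ i (l : List TEnt), l.Sublist (s.ib i) →
      ∀ j, (Function.update s.ib i l j).Sublist (s.ib j) := by
    intro i l hl j
    by_cases hj : j = i
    · subst hj; simpa using hl
    · simp [hj]
  cases h with
  | store i a v => exact Or.inr (Or.inl ⟨i, a, v, rfl, rfl⟩)
  | ldSb => exact Or.inl ⟨⟨rfl, rfl, rfl, fun _ => .refl _⟩, by simp⟩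
  | ldMem i a =>
    exact Or.inl ⟨⟨rfl, rfl, rfl, update_sublist _ _ List.filter_sublist⟩, by simp⟩
  | ldIb i e l1 l2 _ hib =>
    refine Or.inl ⟨⟨rfl, rfl, rfl, update_sublist _ _ ?_⟩, by simp⟩
    rw [hib]
    exact ((List.filter_sublist).cons_cons e).append_left l1
  | commit => exact Or.inl ⟨⟨rfl, rfl, rfl, fun _ => .refl _⟩, by simp⟩
  | reconcile i =>
    exact Or.inl ⟨⟨rfl, rfl, rfl, update_sublist _ _ (List.nil_sublist _)⟩, by simp⟩
  | deqSb i e l1 l2 hsb hold => exact Or.inr (Or.inr ⟨i, e, l1, l2, hsb, hold, rfl, rfl⟩)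

theorem sbTags_store :
    sbTags (s.store i a v) j c =
      if j = i ∧ c = a then s.next :: sbTags s j c else sbTags s j c := by
  by_cases hj : j = i
  · subst hj
    by_cases hc : c = a
    · simp [sbTags, TSt.store, tagsAt_cons, hc]
    · simp [sbTags, TSt.store, tagsAt_cons, hc, Ne.symm hc]
  · simp [sbTags, TSt.store, hj]

theorem mem_sbTags_store (ht : t ∈ sbTags (s.store i a v) j c) :
    (t = s.next ∧ j = i ∧ c = a) ∨ t ∈ sbTags s j c := by
  rw [sbTags_store] at ht
  split_ifs at ht with h
  · exact (List.mem_cons.1 ht).imp (fun ht => ⟨ht, h⟩) id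
  · exact Or.inr ht

theorem ibTags_store :
    ibTags (s.store i a v) j c = if j = i ∧ c = a then [] else ibTags s j c := by
  by_cases hj : j = i
  · subst hj; simp [ibTags, TSt.store, tagsAt_remA]
  · simp [ibTags, TSt.store, hj]

section Dequeue

variable {e : TEnt} {l1 l2 : List TEnt}

theorem sbTags_dequeue_self (hsb : s.sb i = l1 ++ e :: l2) (hold : ¬ hasA l2 e.addr) :
    sbTags s i e.addr = sbTags (s.dequeue i e (l1 ++ l2)) i e.addr ++ [e.tag] := by
  simp [sbTags, TSt.dequeue, hsb, tagsAt_cons, tagsAt_eq_nil_iff.2 hold]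

theorem sbTags_dequeue_of_ne (hsb : s.sb i = l1 ++ e :: l2) (h : j ≠ i ∨ c ≠ e.addr) :
    sbTags (s.dequeue i e (l1 ++ l2)) j c = sbTags s j c := by
  by_cases hj : j = i
  · subst hj
    have hc : e.addr ≠ c := fun h' => (h.resolve_left (not_not.2 rfl)) h'.symm
    simp [sbTags, TSt.dequeue, hsb, tagsAt_cons, hc]
  · simp [sbTags, TSt.dequeue, hj]

theorem sbTags_dequeue_sublist (hsb : s.sb i = l1 ++ e :: l2) (hold : ¬ hasA l2 e.addr) :
    (sbTags (s.dequeue i e (l1 ++ l2)) j c).Sublist (sbTags s j c) := by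
  by_cases h : j = i ∧ c = e.addr
  · obtain ⟨rfl, rfl⟩ := h
    rw [sbTags_dequeue_self hsb hold]
    exact List.sublist_append_left _ _
  · rw [sbTags_dequeue_of_ne hsb (not_and_or.1 h)]

theorem ibTags_dequeue (hsb : s.sb i = l1 ++ e :: l2) :
    ibTags (s.dequeue i e (l1 ++ l2)) j c =
      if c = e.addr ∧ sbTags s j c = [] then (s.mem c).1 :: ibTags s j c else ibTags s j c := by
  have hi : hasA (s.sb i) e.addr := by simp [hasA, hsb]
  by_cases hc : c = e.addr
  · subst hc
    by_cases hj : hasA (s.sb j) e.addr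
    · have : sbTags s j e.addr ≠ [] := fun h => (tagsAt_eq_nil_iff.1 h) hj
      simp [ibTags, TSt.dequeue, hj, this]
    · have hji : j ≠ i := by rintro rfl; exact hj hi
      simp [ibTags, TSt.dequeue, hj, hji, sbTags, tagsAt_eq_nil_iff.2 hj, tagsAt_cons]
  · by_cases hj : j = i ∨ hasA (s.sb j) e.addr
    · simp [ibTags, TSt.dequeue, hj, hc]
    · simp [ibTags, TSt.dequeue, hj, hc, tagsAt_cons, Ne.symm hc]

end Dequeue

end Steps

structure TagInv (tr : List TLab) (s : TSt) : Prop where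
  next_pos : 0 < s.next
  nodup : ∀ j a, (sbTags s j a).Nodup
  eq_of_mem : ∀ {j a j' a' t}, t ∈ sbTags s j a → t ∈ sbTags s j' a' → j = j' ∧ a = a'
  pos_and_lt_next_of_mem : ∀ {j a t}, t ∈ sbTags s j a → 0 < t ∧ t < s.next
  pos_and_lt_next_of_deqAt : ∀ {q t}, DeqAt tr q t → 0 < t ∧ t < s.next
  not_mem_of_deqAt : ∀ {q t}, DeqAt tr q t → ∀ j a, t ∉ sbTags s j a
  deqAt_unique : ∀ {q q' t}, DeqAt tr q t → DeqAt tr q' t → q = q'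

namespace TagInv

variable {tr : List TLab} {s s' : TSt} {x : TLab} {i j a t v : ℕ}

theorem not_deqAt_of_mem (h : TagInv tr s) (ht : t ∈ sbTags s j a) : ∀ q, ¬ DeqAt tr q t :=
  fun _ hq => h.not_mem_of_deqAt hq j a ht

theorem not_mem_of_landed (h : TagInv tr s) (ht : Landed tr t) : t ∉ sbTags s j a := by
  rcases ht with rfl | ⟨q, hq⟩
  exacts [fun h0 => (h.pos_and_lt_next_of_mem h0).1.ne rfl, h.not_mem_of_deqAt hq j a]

theorem not_deqAt_of_snoc_deq {b : ℕ} (h : TagInv (tr ++ [.deq t b]) s) :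
    ∀ q, ¬ DeqAt tr q t :=
  fun _ hq => hq.lt_length.ne (h.deqAt_unique hq.snoc deqAt_snoc_length)

theorem of_sublist (h : TagInv tr s) (hsub : ∀ j a, (sbTags s' j a).Sublist (sbTags s j a))
    (hnext : s'.next = s.next)
    (hx : ∀ t b, x = .deq t b →
      (∃ j a, t ∈ sbTags s j a) ∧ ∀ j a, t ∉ sbTags s' j a) :
    TagInv (tr ++ [x]) s' where
  next_pos := hnext ▸ h.next_pos
  nodup j a := (h.nodup j a).sublist (hsub j a)
  eq_of_mem ht ht' := h.eq_of_mem ((hsub _ _).subset ht) ((hsub _ _).subset ht')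
  pos_and_lt_next_of_mem ht := hnext ▸ h.pos_and_lt_next_of_mem ((hsub _ _).subset ht)
  pos_and_lt_next_of_deqAt hq := by
    rcases hq.of_snoc with hq | ⟨-, b, rfl⟩
    · exact hnext ▸ h.pos_and_lt_next_of_deqAt hq
    · obtain ⟨⟨j, a, ht⟩, -⟩ := hx _ b rfl
      exact hnext ▸ h.pos_and_lt_next_of_mem ht
  not_mem_of_deqAt hq j a ht := by
    rcases hq.of_snoc with hq | ⟨-, b, rfl⟩
    · exact h.not_mem_of_deqAt hq j a ((hsub j a).subset ht)
    · exact (hx _ b rfl).2 j a ht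
  deqAt_unique hq hq' := by
    rcases hq.of_snoc with hq | ⟨rfl, b, rfl⟩ <;>
      rcases hq'.of_snoc with hq' | ⟨rfl, b', hx'⟩
    · exact h.deqAt_unique hq hq'
    · obtain ⟨⟨j, a, ht⟩, -⟩ := hx _ b' hx'
      exact absurd hq (h.not_deqAt_of_mem ht _)
    · obtain ⟨⟨j, a, ht⟩, -⟩ := hx _ b rfl
      exact absurd hq' (h.not_deqAt_of_mem ht _)
    · rfl

theorem store (h : TagInv tr s) : TagInv (tr ++ [.tau]) (s.store i a v) where
  next_pos := Nat.succ_pos _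
  nodup j c := by
    rw [sbTags_store]
    split_ifs
    · exact (h.nodup j c).cons fun hn => (h.pos_and_lt_next_of_mem hn).2.false
    · exact h.nodup j c
  eq_of_mem ht ht' := by
    rcases mem_sbTags_store ht with ⟨rfl, rfl, rfl⟩ | hold
    · rcases mem_sbTags_store ht' with ⟨-, rfl, rfl⟩ | hold'
      · exact ⟨rfl, rfl⟩
      · exact absurd (h.pos_and_lt_next_of_mem hold').2 (lt_irrefl _)
    · rcases mem_sbTags_store ht' with ⟨rfl, -⟩ | hold'
      · exact absurd (h.pos_and_lt_next_of_mem hold).2 (lt_irrefl _)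
      · exact h.eq_of_mem hold hold'
  pos_and_lt_next_of_mem ht := by
    rcases mem_sbTags_store ht with ⟨rfl, -⟩ | ht
    · exact ⟨h.next_pos, Nat.lt_succ_self _⟩
    · exact (h.pos_and_lt_next_of_mem ht).imp_right Nat.lt_succ_of_lt
  pos_and_lt_next_of_deqAt hq := by
    rcases hq.of_snoc with hq | ⟨-, -, ⟨⟩⟩
    exact (h.pos_and_lt_next_of_deqAt hq).imp_right Nat.lt_succ_of_lt
  not_mem_of_deqAt hq j c ht := by
    rcases hq.of_snoc with hq | ⟨-, -, ⟨⟩⟩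
    rcases mem_sbTags_store ht with ⟨rfl, -⟩ | ht
    · exact (lt_irrefl _) (h.pos_and_lt_next_of_deqAt hq).2
    · exact h.not_mem_of_deqAt hq j c ht
  deqAt_unique hq hq' := by
    rcases hq.of_snoc with hq | ⟨-, -, ⟨⟩⟩
    rcases hq'.of_snoc with hq' | ⟨-, -, ⟨⟩⟩
    exact h.deqAt_unique hq hq'

theorem step (h : TagInv tr s) (hstep : TStep s x s') : TagInv (tr ++ [x]) s' := by
  rcases hstep.quiet_or_store_or_dequeue with ⟨hq, hx⟩ | ⟨i, a, v, rfl, rfl⟩ |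
    ⟨i, e, l1, l2, hsb, hold, rfl, rfl⟩
  · refine h.of_sublist (fun j a => ?_) hq.next_eq fun t b hxt => absurd hxt (hx t b)
    simp only [sbTags, hq.sb_eq, List.Sublist.refl]
  · exact h.store
  · refine h.of_sublist (fun j c => sbTags_dequeue_sublist hsb hold) rfl ?_
    rintro t b ⟨⟩
    have hlast := sbTags_dequeue_self hsb hold
    refine ⟨⟨i, e.addr, by simp [hlast]⟩, fun j c ht => ?_⟩
    by_cases hjc : j = i ∧ c = e.addr
    · obtain ⟨rfl, rfl⟩ := hjc
      have := h.nodup j e.addr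
      rw [hlast, List.nodup_append] at this
      exact this.2.2 _ ht _ (List.mem_singleton_self _) rfl
    · rw [sbTags_dequeue_of_ne hsb (not_and_or.1 hjc)] at ht
      exact hjc (h.eq_of_mem ht (by simp [hlast]))

end TagInv

structure StaleInv (tr : List TLab) (s : TSt) : Prop where
  ibTags_eq_nil : ∀ {j a}, sbTags s j a ≠ [] → ibTags s j a = []
  ibTags_sorted : ∀ j a, (ibTags s j a).Pairwise fun t t' => LandedBefore tr t' t
  landedBefore_mem : ∀ {j a t}, t ∈ ibTags s j a → LandedBefore tr t (s.mem a).1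
  mem_landed : ∀ a, Landed tr (s.mem a).1

namespace StaleInv

variable {tr : List TLab} {s s' : TSt} {x : TLab} {i : ℕ}

theorem of_sublist (h : StaleInv tr s) (hmem : s'.mem = s.mem)
    (hsub : ∀ j a, (ibTags s' j a).Sublist (ibTags s j a))
    (hnil : ∀ {j a}, sbTags s' j a ≠ [] → ibTags s' j a = []) : StaleInv (tr ++ [x]) s' where
  ibTags_eq_nil := hnil
  ibTags_sorted j a := ((h.ibTags_sorted j a).sublist (hsub j a)).imp LandedBefore.snoc
  landedBefore_mem ht := hmem ▸ (h.landedBefore_mem ((hsub _ _).subset ht)).snoc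
  mem_landed a := hmem ▸ (h.mem_landed a).snoc

theorem dequeue (ht : TagInv tr s) (h : StaleInv tr s) {e : TEnt} {l1 l2 : List TEnt}
    (hsb : s.sb i = l1 ++ e :: l2) (hold : ¬ hasA l2 e.addr) :
    StaleInv (tr ++ [.deq e.tag e.addr]) (s.dequeue i e (l1 ++ l2)) := by
  have hfresh : ∀ q, ¬ DeqAt tr q e.tag :=
    ht.not_deqAt_of_mem (j := i) (a := e.addr) (by simp [sbTags_dequeue_self hsb hold])
  refine ⟨fun {j c} hne => ?_, fun j c => ?_, fun {j c t} hmem => ?_, fun c => ?_⟩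
  · have hne' : sbTags s j c ≠ [] := fun hc =>
      hne (List.eq_nil_of_sublist_nil (hc ▸ sbTags_dequeue_sublist hsb hold))
    rw [ibTags_dequeue hsb, if_neg fun hc => hne' hc.2]
    exact h.ibTags_eq_nil hne'
  · rw [ibTags_dequeue hsb]
    split_ifs with hc
    · refine List.pairwise_cons.2 ⟨fun t ht => (h.landedBefore_mem ht).snoc, ?_⟩
      exact (h.ibTags_sorted j c).imp LandedBefore.snoc
    · exact (h.ibTags_sorted j c).imp LandedBefore.snoc
  · rw [ibTags_dequeue hsb] at hmem
    by_cases hc : c = e.addr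
    · subst hc
      simp only [TSt.dequeue, Function.update_self]
      have hland : Landed tr t := by
        split_ifs at hmem
        · rcases List.mem_cons.1 hmem with rfl | hmem
          exacts [h.mem_landed _, (h.landedBefore_mem hmem).landed]
        · exact (h.landedBefore_mem hmem).landed
      exact LandedBefore.snoc_deq hland hfresh
    · simp only [hc, false_and, if_false] at hmem
      simpa [TSt.dequeue, Function.update_of_ne hc] using (h.landedBefore_mem hmem).snoc
  · by_cases hc : c = e.addr
    · subst hc
      simp only [TSt.dequeue, Function.update_self]
      exact Or.inr ⟨_, deqAt_snoc_length⟩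
    · simpa [TSt.dequeue, Function.update_of_ne hc] using (h.mem_landed c).snoc

theorem step (ht : TagInv tr s) (h : StaleInv tr s) (hstep : TStep s x s') :
    StaleInv (tr ++ [x]) s' := by
  rcases hstep.quiet_or_store_or_dequeue with ⟨hq, -⟩ | ⟨i, a, v, rfl, rfl⟩ |
    ⟨i, e, l1, l2, hsb, hold, rfl, rfl⟩
  · have hsub : ∀ j a, (ibTags s' j a).Sublist (ibTags s j a) :=
      fun j a => (hq.ib_sublist j).tagsAt
    refine h.of_sublist hq.mem_eq hsub fun {j a} hne => List.eq_nil_of_sublist_nil ?_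
    exact h.ibTags_eq_nil (by simpa only [sbTags, hq.sb_eq] using hne) ▸ hsub j a
  · refine h.of_sublist rfl (fun j c => ?_) fun {j c} hne => ?_ <;>
      rw [ibTags_store] <;> split_ifs with hjc
    · exact List.nil_sublist _
    · exact .refl _
    · rfl
    · rw [sbTags_store, if_neg hjc] at hne
      exact h.ibTags_eq_nil hne
  · exact h.dequeue ht hsb hold

end StaleInv

-- Buffers keep the newest entry at the head, so `t'` is the newer store.
def QueuedBefore (s : TSt) (t t' : ℕ) : Prop := ∃ j a, [t', t].Sublist (sbTags s j a)

-- Coherence order: `t` updates memory before `t'` does, however the trace continues.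
def CoBefore (tr : List TLab) (s : TSt) (t t' : ℕ) : Prop :=
  LandedBefore tr t t' ∨ QueuedBefore s t t'

theorem TagInv.lt_of_coBefore {tr : List TLab} {s : TSt} {t t' q q' : ℕ} (h : TagInv tr s)
    (hco : CoBefore tr s t t') (hq : DeqAt tr q t) (hq' : DeqAt tr q' t') : q < q' := by
  rcases hco with (rfl | ⟨q₀, hq₀, hafter⟩) | ⟨j, a, hsub⟩
  · exact absurd (h.pos_and_lt_next_of_deqAt hq).1 (lt_irrefl 0)
  · exact h.deqAt_unique hq hq₀ ▸ hafter q' hq'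
  · exact absurd hq (h.not_deqAt_of_mem (hsub.subset (by simp)) q)

theorem CoBefore.step {tr : List TLab} {s s' : TSt} {x : TLab} {t t' : ℕ} (ht : TagInv tr s)
    (hstep : TStep s x s') (h : CoBefore tr s t t') : CoBefore (tr ++ [x]) s' t t' := by
  have ht' := ht.step hstep
  rcases h with h | ⟨j, a, hsub⟩
  · exact Or.inl h.snoc
  rcases hstep.quiet_or_store_or_dequeue with ⟨hq, -⟩ | ⟨i, b, v, rfl, rfl⟩ |
    ⟨i, e, l1, l2, hsb, hold, rfl, rfl⟩
  · exact Or.inr ⟨j, a, by simpa only [sbTags, hq.sb_eq] using hsub⟩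
  · refine Or.inr ⟨j, a, ?_⟩
    rw [sbTags_store]
    split_ifs
    exacts [hsub.cons _, hsub]
  · by_cases hja : j = i ∧ a = e.addr
    · obtain ⟨rfl, rfl⟩ := hja
      rw [sbTags_dequeue_self hsb hold] at hsub
      rcases List.sublist_pair_append_singleton hsub with hsub | ⟨rfl, hmem⟩
      · exact Or.inr ⟨j, e.addr, hsub⟩
      · exact Or.inl (.of_landed (Or.inr ⟨_, deqAt_snoc_length⟩) (ht'.not_deqAt_of_mem hmem))
    · exact Or.inr ⟨j, a, by rwa [sbTags_dequeue_of_ne hsb (not_and_or.1 hja)]⟩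

section Visible

variable {tr : List TLab} {s s' : TSt} {x : TLab} {i j a c t v : ℕ}

theorem Visible.of_quiet (hq : Quiet s s') (hv : Visible s' j a t) : Visible s j a t := by
  simp only [Visible, sbTags, ibTags, hq.sb_eq, hq.mem_eq] at hv ⊢
  exact hv.imp_right (And.imp_right (Or.imp_right ((hq.ib_sublist j).tagsAt.subset ·)))

theorem Visible.of_store (hv : Visible (s.store i c v) j a t) :
    Visible s j a t ∨ sbTags (s.store i c v) j a = t :: sbTags s j a := by
  unfold Visible at hv
  rw [sbTags_store, ibTags_store] at hv
  rw [sbTags_store]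
  split_ifs at hv ⊢ with hja
  · exact Or.inr (by simpa using hv)
  · exact Or.inl hv

theorem Visible.of_dequeue (hs : StaleInv tr s) {e : TEnt} {l1 l2 : List TEnt}
    (hsb : s.sb i = l1 ++ e :: l2) (hold : ¬ hasA l2 e.addr)
    (hv : Visible (s.dequeue i e (l1 ++ l2)) j c t) :
    Visible s j c t ∨ (c = e.addr ∧ t = e.tag ∧ sbTags s j c = []) := by
  by_cases hjc : j = i ∧ c = e.addr
  · obtain ⟨rfl, rfl⟩ := hjc
    have hlast := sbTags_dequeue_self hsb hold
    have hib : ibTags (s.dequeue j e (l1 ++ l2)) j e.addr = [] := by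
      rw [ibTags_dequeue hsb, if_neg (by simp [hlast])]
      exact hs.ibTags_eq_nil (by simp [hlast])
    unfold Visible at hv
    rw [hib] at hv
    left
    rw [Visible, hlast]
    rcases hP : sbTags (s.dequeue j e (l1 ++ l2)) j e.addr with _ | ⟨h, P⟩ <;> rw [hP] at hv
    · simpa [TSt.dequeue, eq_comm] using hv
    · simpa using hv
  · unfold Visible at hv
    rw [sbTags_dequeue_of_ne hsb (not_and_or.1 hjc), ibTags_dequeue hsb] at hv
    split_ifs at hv with hc
    · obtain ⟨rfl, hnil⟩ := hc
      simp only [hnil, TSt.dequeue, Function.update_self, List.head?_nil, reduceCtorEq,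
        List.mem_cons, true_and, false_or] at hv
      rcases hv with rfl | hv
      · exact Or.inr ⟨rfl, rfl, hnil⟩
      · exact Or.inl (Or.inr ⟨hnil, hv⟩)
    · refine Or.inl (hv.imp_right fun ⟨hnil, hv⟩ => ⟨hnil, hv.imp_left fun hm => ?_⟩)
      have hc' : c ≠ e.addr := fun h => hc ⟨h, hnil⟩
      simpa [TSt.dequeue, Function.update_of_ne hc'] using hm

theorem Visible.step (hs : StaleInv tr s) (hstep : TStep s x s') (hv : Visible s' j a t) :
    Visible s j a t ∨ (x = .tau ∧ sbTags s' j a = t :: sbTags s j a) ∨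
      (x = .deq t a ∧ sbTags s j a = []) := by
  rcases hstep.quiet_or_store_or_dequeue with ⟨hq, -⟩ | ⟨i, b, v, rfl, rfl⟩ |
    ⟨i, e, l1, l2, hsb, hold, rfl, rfl⟩
  · exact Or.inl (hv.of_quiet hq)
  · exact hv.of_store.imp_right fun h => Or.inl ⟨rfl, h⟩
  · rcases hv.of_dequeue hs hsb hold with hv | ⟨rfl, rfl, hnil⟩
    exacts [Or.inl hv, Or.inr (Or.inr ⟨rfl, hnil⟩)]

theorem TStep.load (hstep : TStep s (.load i a t) s') (hs : StaleInv tr s) :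
    Visible s i a t ∧ ∀ {t'}, Visible s' i a t' → t = t' ∨ LandedBefore tr t t' := by
  cases hstep with
  | ldSb _ e l1 l2 hsb hy =>
    have hhead : (sbTags s i e.addr).head? = some e.tag := by
      simp [sbTags, hsb, tagsAt_cons, tagsAt_eq_nil_iff.2 hy]
    refine ⟨Or.inl hhead, fun hv => Or.inl ?_⟩
    rcases hv with hv | ⟨hnil, -⟩
    · exact Option.some_inj.1 (hhead.symm.trans hv)
    · simp [hnil] at hhead
  | ldMem _ _ hnone =>
    have hnil := tagsAt_eq_nil_iff.2 hnone
    refine ⟨Or.inr ⟨hnil, Or.inl rfl⟩, fun hv => Or.inl ?_⟩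
    simpa [Visible, sbTags, ibTags, hnil, tagsAt_remA, eq_comm] using hv
  | ldIb _ e l1 l2 hnone hib =>
    have hnil := tagsAt_eq_nil_iff.2 hnone
    have hsorted := hs.ibTags_sorted i e.addr
    simp only [ibTags, hib, tagsAt_append, tagsAt_cons, if_pos, List.pairwise_append] at hsorted
    have hemem : e.tag ∈ ibTags s i e.addr := by simp [ibTags, hib, tagsAt_cons]
    refine ⟨Or.inr ⟨hnil, Or.inr hemem⟩, fun {t'} hv => ?_⟩
    simp only [Visible, sbTags, ibTags, hnil, Function.update_self, tagsAt_append, tagsAt_cons,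
      tagsAt_remA, if_pos, List.head?_nil, reduceCtorEq, false_or, true_and, List.mem_append,
      List.mem_singleton] at hv
    rcases hv with rfl | ht' | rfl
    · exact Or.inr (hs.landedBefore_mem hemem)
    · exact Or.inr (hsorted.2.2 t' ht' e.tag (List.mem_cons_self ..))
    · exact Or.inl rfl

end Visible

structure TInv (tr : List TLab) (s : TSt) : Prop where
  tags : TagInv tr s
  stale : StaleInv tr s
  loads : ∀ {p i a t : ℕ}, tr[p]? = some (.load i a t) →
    ∀ {t' : ℕ}, Visible s i a t' → t = t' ∨ CoBefore tr s t t'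
  pairs : ∀ {p1 p2 i a t1 t2 : ℕ}, p1 < p2 → tr[p1]? = some (.load i a t1) →
    tr[p2]? = some (.load i a t2) → t1 ≠ t2 → CoBefore tr s t1 t2

namespace TInv

variable {tr : List TLab} {s s' : TSt} {x : TLab} {p j a t : ℕ}

theorem landed_or_mem_sbTags (h : TInv tr s) (hp : tr[p]? = some (.load j a t)) :
    Landed tr t ∨ t ∈ sbTags s j a := by
  rcases hs : sbTags s j a with _ | ⟨c, P⟩
  · have hc := h.loads hp (t' := (s.mem a).1) (Or.inr ⟨hs, Or.inl rfl⟩)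
    rcases hc with rfl | hc | ⟨j', a', hsub⟩
    · exact Or.inl (h.stale.mem_landed a)
    · exact Or.inl hc.landed
    · exact absurd (hsub.subset (by simp)) (h.tags.not_mem_of_landed (h.stale.mem_landed a))
  · have hc := h.loads hp (t' := c) (Or.inl (by simp [hs]))
    rcases hc with rfl | hc | ⟨j', a', hsub⟩
    · exact Or.inr (by simp)
    · exact Or.inl hc.landed
    · obtain ⟨rfl, rfl⟩ :=
        h.tags.eq_of_mem (hsub.subset (by simp)) (hs ▸ List.mem_cons_self ..)
      exact Or.inr (hs ▸ hsub.subset (by simp))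

theorem loads_step (h : TInv tr s) (hstep : TStep s x s') {p i a t : ℕ}
    (hp : (tr ++ [x])[p]? = some (.load i a t)) {t' : ℕ} (hv : Visible s' i a t') :
    t = t' ∨ CoBefore (tr ++ [x]) s' t t' := by
  have ht' := h.tags.step hstep
  rcases getElem?_snoc_eq_some hp with hold | ⟨-, rfl⟩
  · rcases hv.step h.stale hstep with hv | ⟨-, hsb⟩ | ⟨rfl, hnil⟩
    · exact (h.loads hold hv).imp_right (CoBefore.step h.tags hstep)
    · refine Or.inr ?_
      rcases h.landed_or_mem_sbTags hold with hl | hmem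
      · exact Or.inl (.of_landed hl.snoc (ht'.not_deqAt_of_mem (hsb ▸ List.mem_cons_self ..)))
      · exact Or.inr ⟨i, a, hsb ▸ List.cons_sublist_cons.2 (List.singleton_sublist.2 hmem)⟩
    · rcases h.landed_or_mem_sbTags hold with hl | hmem
      · exact Or.inr (Or.inl (.snoc_deq hl ht'.not_deqAt_of_snoc_deq))
      · simp [hnil] at hmem
  · exact ((hstep.load h.stale).2 hv).imp_right fun hl => Or.inl hl.snoc

theorem pairs_step (h : TInv tr s) (hstep : TStep s x s') {p1 p2 i a t1 t2 : ℕ} (hlt : p1 < p2)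
    (h1 : (tr ++ [x])[p1]? = some (.load i a t1)) (h2 : (tr ++ [x])[p2]? = some (.load i a t2))
    (hne : t1 ≠ t2) : CoBefore (tr ++ [x]) s' t1 t2 := by
  have hlen : p2 < tr.length + 1 := by simpa using (List.getElem?_eq_some_iff.1 h2).1
  rw [List.getElem?_append_left (by omega)] at h1
  rcases getElem?_snoc_eq_some h2 with h2 | ⟨-, rfl⟩
  · exact (h.pairs hlt h1 h2 hne).step h.tags hstep
  · exact ((h.loads h1 (hstep.load h.stale).1).resolve_left hne).step h.tags hstep

theorem step (h : TInv tr s) (hstep : TStep s x s') : TInv (tr ++ [x]) s' :=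
  ⟨h.tags.step hstep, h.stale.step h.tags hstep, h.loads_step hstep, h.pairs_step hstep⟩

theorem init (m0 : ℕ → ℕ) : TInv [] (TInit m0) where
  tags := ⟨Nat.one_pos, by simp [sbTags, tagsAt, TInit], by simp [sbTags, tagsAt, TInit],
    by simp [sbTags, tagsAt, TInit], fun ⟨_, h⟩ => by simp at h, fun ⟨_, h⟩ => by simp at h,
    fun ⟨_, h⟩ => by simp at h⟩
  stale := ⟨fun h => by simp [sbTags, tagsAt, TInit] at h, by simp [ibTags, tagsAt, TInit],
    by simp [ibTags, tagsAt, TInit], fun _ => Or.inl rfl⟩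
  loads h := by simp at h
  pairs _ h := by simp at h

theorem of_steps {ls : List TLab} (hsteps : TSteps s ls s') (h : TInv tr s) :
    TInv (tr ++ ls) s' := by
  induction hsteps generalizing tr with
  | nil => simpa using h
  | cons hstep _ ih => simpa using ih (h.step hstep)

end TInv

/-- per-location SC for same-address load pairs in the WMM I²E
machine: if a processor performs two loads to the same address, the first
reading store `t1` and the second reading a different store `t2`, then in the
per-address order in which stores update the atomic memory, `t1` precedes
`t2`: the dequeue of `t1` occurs before the dequeue of `t2` in the trace. -/
theorem wmm_per_location_sc_loads (m0 : ℕ → ℕ) (tr : List TLab) (s : TSt)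
    (h : TSteps (TInit m0) tr s) :
    ∀ i a t1 t2 (p1 p2 : ℕ), p1 < p2 →
      tr[p1]? = some (.load i a t1) →
      tr[p2]? = some (.load i a t2) →
      t1 ≠ t2 →
      ∀ (q1 q2 : ℕ), tr[q1]? = some (.deq t1 a) → tr[q2]? = some (.deq t2 a) →
        q1 < q2 := by
  intro i a t1 t2 p1 p2 hlt h1 h2 hne q1 q2 hq1 hq2
  have hinv : TInv tr s := by simpa using (TInv.init m0).of_steps h
  exact hinv.tags.lt_of_coBefore (hinv.pairs hlt h1 h2 hne) ⟨a, hq1⟩ ⟨a, hq2⟩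
end

section
/- In the TSO I²E abstract machine, every run of the SB program (P1: St a 1; Commit; r1 = Ld b and P2: St b 1; Commit; r2 = Ld a, with a ≠ b and memory initialized to 0) yields r1 = 1 or r2 = 1; i.e., the outcome r1 = r2 = 0 is unreachable. -/
/-- Look up the youngest store-buffer entry for address `a` (head of the list
is the newest entry). -/
def bufLookup (l : List (ℕ × ℕ)) (a : ℕ) : Option ℕ :=
  (l.find? (fun e => e.1 = a)).map Prod.snd

/-- TSO-Ld value: bypass from the youngest same-address store-buffer entry if
present, otherwise read the atomic memory. -/
def tsoLdVal (l : List (ℕ × ℕ)) (mem : ℕ → ℕ) (a : ℕ) : ℕ :=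
  (bufLookup l a).getD (mem a)

/-- State of the TSO I²E machine running the two-processor SB program:
atomic memory, the two store buffers, program counters, and the two result
registers. -/
structure TsoSt where
  mem : ℕ → ℕ
  sb1 : List (ℕ × ℕ)
  sb2 : List (ℕ × ℕ)
  pc1 : ℕ
  pc2 : ℕ
  r1 : Option ℕ
  r2 : Option ℕ

def TsoInit : TsoSt :=
  { mem := fun _ => 0, sb1 := [], sb2 := [], pc1 := 0, pc2 := 0,
    r1 := none, r2 := none }

/-- Operations of the TSO I²E machine for the fenced SB program
P1: St a 1; Commit; r1 = Ld b and P2: St b 1; Commit; r2 = Ld a. -/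
inductive Tso9Step (a b : ℕ) : TsoSt → TsoSt → Prop
  | st1 (s : TsoSt) (h : s.pc1 = 0) :
      Tso9Step a b s { s with sb1 := (a, 1) :: s.sb1, pc1 := 1 }
  | com1 (s : TsoSt) (h : s.pc1 = 1) (he : s.sb1 = []) :
      Tso9Step a b s { s with pc1 := 2 }
  | ld1 (s : TsoSt) (h : s.pc1 = 2) :
      Tso9Step a b s { s with r1 := some (tsoLdVal s.sb1 s.mem b), pc1 := 3 }
  | st2 (s : TsoSt) (h : s.pc2 = 0) :
      Tso9Step a b s { s with sb2 := (b, 1) :: s.sb2, pc2 := 1 }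
  | com2 (s : TsoSt) (h : s.pc2 = 1) (he : s.sb2 = []) :
      Tso9Step a b s { s with pc2 := 2 }
  | ld2 (s : TsoSt) (h : s.pc2 = 2) :
      Tso9Step a b s { s with r2 := some (tsoLdVal s.sb2 s.mem a), pc2 := 3 }
  /-- TSO-DeqSb: dequeue the oldest entry (end of the list) to memory. -/
  | deq1 (s : TsoSt) (x : ℕ × ℕ) (l : List (ℕ × ℕ)) (h : s.sb1 = l ++ [x]) :
      Tso9Step a b s { s with mem := Function.update s.mem x.1 x.2, sb1 := l }
  | deq2 (s : TsoSt) (x : ℕ × ℕ) (l : List (ℕ × ℕ)) (h : s.sb2 = l ++ [x]) :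
      Tso9Step a b s { s with mem := Function.update s.mem x.1 x.2, sb2 := l }

def SBInv (a b : ℕ) (s : TsoSt) : Prop :=
  ((s.pc1 = 0 ∧ s.sb1 = []) ∨
   (s.pc1 = 1 ∧ (s.sb1 = [(a,1)] ∨ (s.sb1 = [] ∧ s.mem a = 1))) ∨
   ((s.pc1 = 2 ∨ s.pc1 = 3) ∧ s.sb1 = [] ∧ s.mem a = 1)) ∧
  ((s.pc2 = 0 ∧ s.sb2 = []) ∨
   (s.pc2 = 1 ∧ (s.sb2 = [(b,1)] ∨ (s.sb2 = [] ∧ s.mem b = 1))) ∨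
   ((s.pc2 = 2 ∨ s.pc2 = 3) ∧ s.sb2 = [] ∧ s.mem b = 1)) ∧
  (s.pc1 = 3 ∧ s.pc2 = 3 → s.r1 = some 1 ∨ s.r2 = some 1)

lemma sbinv_step {a b : ℕ} (hab : a ≠ b) {s t : TsoSt}
    (hst : Tso9Step a b s t) (hI : SBInv a b s) : SBInv a b t := by
  obtain ⟨H1, H2, H3⟩ := hI
  cases hst with
  | st1 h =>
      refine ⟨?_, ?_, ?_⟩
      · rcases H1 with ⟨_, hsb⟩ | ⟨h', _⟩ | ⟨h', _⟩ <;> simp_all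
      · simpa using H2
      · simp
  | com1 h he =>
      refine ⟨?_, ?_, ?_⟩
      · rcases H1 with ⟨h', _⟩ | ⟨h', hc⟩ | ⟨h', _⟩ <;> simp_all
      · simpa using H2
      · simp
  | ld1 h =>
      have hsb : s.sb1 = [] ∧ s.mem a = 1 := by
        rcases H1 with ⟨h', _⟩ | ⟨h', _⟩ | ⟨h', hc⟩ <;> simp_all
      refine ⟨?_, ?_, ?_⟩
      · right; right; exact ⟨by simp, by simp [hsb.1], by simp [hsb.2]⟩
      · simpa using H2
      · intro hp
        rcases H2 with ⟨h', _⟩ | ⟨h', _⟩ | ⟨h', hc, hm⟩ <;>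
          simp_all [tsoLdVal, bufLookup]
  | st2 h =>
      refine ⟨?_, ?_, ?_⟩
      · simpa using H1
      · rcases H2 with ⟨_, hsb⟩ | ⟨h', _⟩ | ⟨h', _⟩ <;> simp_all
      · simp
  | com2 h he =>
      refine ⟨?_, ?_, ?_⟩
      · simpa using H1
      · rcases H2 with ⟨h', _⟩ | ⟨h', hc⟩ | ⟨h', _⟩ <;> simp_all
      · simp
  | ld2 h =>
      have hsb : s.sb2 = [] ∧ s.mem b = 1 := by
        rcases H2 with ⟨h', _⟩ | ⟨h', _⟩ | ⟨h', hc⟩ <;> simp_all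
      refine ⟨?_, ?_, ?_⟩
      · simpa using H1
      · right; right; exact ⟨by simp, by simp [hsb.1], by simp [hsb.2]⟩
      · intro hp
        rcases H1 with ⟨h', _⟩ | ⟨h', _⟩ | ⟨h', hc, hm⟩ <;>
          simp_all [tsoLdVal, bufLookup]
  | deq1 x l h =>
      have hx : l = [] ∧ x = (a,1) ∧ s.pc1 = 1 := by
        rcases H1 with ⟨h', hc⟩ | ⟨h', hc | hc⟩ | ⟨h', hc, _⟩ <;>
          · rw [h] at hc; cases l <;> simp_all
      obtain ⟨hl, hxa, hp1⟩ := hx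
      subst hl hxa
      refine ⟨?_, ?_, by simpa using H3⟩
      · right; left
        exact ⟨by simpa using hp1, Or.inr ⟨rfl, by simp [Function.update_self]⟩⟩
      · rcases H2 with ⟨h', hc⟩ | ⟨h', hc | hc⟩ | ⟨h', hc, hm⟩
        · left; exact ⟨by simpa using h', by simpa using hc⟩
        · right; left; exact ⟨by simpa using h', Or.inl (by simpa using hc)⟩
        · right; left
          exact ⟨by simpa using h', Or.inr ⟨by simpa using hc.1,
            by simp [Function.update_of_ne (Ne.symm hab), hc.2]⟩⟩
        · right; right
          exact ⟨by simpa using h', by simpa using hc,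
            by simp [Function.update_of_ne (Ne.symm hab), hm]⟩
  | deq2 x l h =>
      have hx : l = [] ∧ x = (b,1) ∧ s.pc2 = 1 := by
        rcases H2 with ⟨h', hc⟩ | ⟨h', hc | hc⟩ | ⟨h', hc, _⟩ <;>
          · rw [h] at hc; cases l <;> simp_all
      obtain ⟨hl, hxb, hp2⟩ := hx
      subst hl hxb
      refine ⟨?_, ?_, by simpa using H3⟩
      · rcases H1 with ⟨h', hc⟩ | ⟨h', hc | hc⟩ | ⟨h', hc, hm⟩
        · left; exact ⟨by simpa using h', by simpa using hc⟩
        · right; left; exact ⟨by simpa using h', Or.inl (by simpa using hc)⟩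
        · right; left
          exact ⟨by simpa using h', Or.inr ⟨by simpa using hc.1,
            by simp [Function.update_of_ne hab, hc.2]⟩⟩
        · right; right
          exact ⟨by simpa using h', by simpa using hc,
            by simp [Function.update_of_ne hab, hm]⟩
      · right; left
        exact ⟨by simpa using hp2, Or.inr ⟨rfl, by simp [Function.update_self]⟩⟩

lemma sbinv_reach {a b : ℕ} (hab : a ≠ b) {s : TsoSt}
    (h : Relation.ReflTransGen (Tso9Step a b) TsoInit s) : SBInv a b s := by
  induction h with
  | refl => simp [SBInv, TsoInit]
  | tail _ hstep ih => exact sbinv_step hab hstep ih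

/-- in TSO, the SB program with Commit fences never yields
r1 = r2 = 0: in every reachable state in which both loads have executed,
r1 = 1 or r2 = 1. -/
theorem tso_SB_with_commit (a b : ℕ) (hab : a ≠ b) (s : TsoSt)
    (h : Relation.ReflTransGen (Tso9Step a b) TsoInit s)
    (h1 : s.pc1 = 3) (h2 : s.pc2 = 3) :
    s.r1 = some 1 ∨ s.r2 = some 1 := by
  exact (sbinv_reach hab h).2.2 ⟨h1, h2⟩
end

section
/- In the RC (Release Consistency) model, the WWC litmus test outcome is forbidden: if in the program P1: St a 2; P2: r1 = Ld a; St b (r1-1); P3: r2 = Ld b; St a r2 (a ≠ b, initialized to 0) we have r1 = 2 and r2 = 1, then under RC's axioms the final memory value of a cannot be 2. -/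
/-- Operations of RC instructions. -/
inductive ROp
  | ld (a : ℕ)
  | st (a : ℕ) (v : ℕ)
  deriving DecidableEq

/-- An RC instruction: processor id and operation. -/
structure RInstr where
  proc : ℕ
  op : ROp
  deriving DecidableEq

def rIsStoreTo (a : ℕ) (x : RInstr) : Prop := ∃ v, x.op = ROp.st a v

/-- in RC, the WWC outcome is forbidden.  `perf x p` is the time
at which instruction `x` is performed with respect to processor `p`; `ser` is
the per-location serialization order of stores; `rf` is reads-from; `dep` is
(transitive) dependency from a load to a store.  RC axioms:
(1) `ser` is a strict total order on the stores to each location, and stores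
are performed with respect to every processor in `ser` order;
(2) if a load reads from a store, the store is performed w.r.t. the load's
processor before the load;
(3) a store that depends on a load cannot be performed w.r.t. any processor
before that load.
For WWC (I1: St a 2 ∥ I2: r1 = Ld a; I3: St b (r1-1) ∥ I4: r2 = Ld b;
I5: St a r2, with r1 = 2, r2 = 1, a ≠ b, initialized to 0), I1 precedes I5 in
the serialization order for `a`, hence the final memory value of `a` — the
value of the `ser`-last store to `a` — cannot be 2. -/
theorem rc_forbids_WWC (a b : ℕ) (hab : a ≠ b)
    (perf : RInstr → ℕ → ℕ)
    (ser : RInstr → RInstr → Prop)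
    (rf : RInstr → RInstr → Prop)
    (dep : RInstr → RInstr → Prop)
    (I0a I0b I1 I2 I3 I4 I5 : RInstr)
    (hI0a : I0a = ⟨0, ROp.st a 0⟩) (hI0b : I0b = ⟨0, ROp.st b 0⟩)
    (hI1 : I1 = ⟨1, ROp.st a 2⟩)
    (hI2 : I2 = ⟨2, ROp.ld a⟩) (hI3 : I3 = ⟨2, ROp.st b 1⟩)
    (hI4 : I4 = ⟨3, ROp.ld b⟩) (hI5 : I5 = ⟨3, ROp.st a 1⟩)
    -- Axiom (1): `ser` is a strict total order on the stores to `a` …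
    (hser_irrefl : ∀ x, ¬ ser x x)
    (hser_trans : ∀ x y z, ser x y → ser y z → ser x z)
    (hser_total : ∀ x y, rIsStoreTo a x → rIsStoreTo a y →
      (x = I0a ∨ x = I1 ∨ x = I5) → (y = I0a ∨ y = I1 ∨ y = I5) →
      x ≠ y → ser x y ∨ ser y x)
    -- … and stores are performed w.r.t. every processor in `ser` order:
    (hser_perf : ∀ x y, ser x y → ∀ p, perf x p < perf y p)
    -- Axiom (2): a load's source is performed w.r.t. the load's processor
    -- before the load:
    (hrf_perf : ∀ S L, rf S L → perf S L.proc < perf L L.proc)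
    -- Axiom (3): a dependent store is not performed w.r.t. any processor
    -- before the load it depends on:
    (hdep_perf : ∀ L S, dep L S → ∀ p, perf L L.proc ≤ perf S p)
    -- WWC reads-from and dependency facts (r1 = 2, r2 = 1):
    (hrf1 : rf I1 I2) (hrf2 : rf I3 I4) (hdep : dep I2 I5) :
    ser I1 I5 ∧
    ∀ S, (S = I0a ∨ S = I1 ∨ S = I5) →
      (∀ S', (S' = I0a ∨ S' = I1 ∨ S' = I5) → S' ≠ S → ser S' S) →
      ∀ v, S.op = ROp.st a v → v ≠ 2 := by
  have h15 : ser I1 I5 := by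
    have hne : I1 ≠ I5 := by subst hI1 hI5; simp
    have := hser_total I1 I5 ⟨2, by rw [hI1]⟩ ⟨1, by rw [hI5]⟩
      (Or.inr (Or.inl rfl)) (Or.inr (Or.inr rfl)) hne
    rcases this with h | h
    · exact h
    · exfalso
      have h1 : perf I1 I2.proc < perf I2 I2.proc := hrf_perf I1 I2 hrf1
      have h2 : perf I2 I2.proc ≤ perf I5 I2.proc := hdep_perf I2 I5 hdep I2.proc
      have h3 : perf I5 I2.proc < perf I1 I2.proc := hser_perf I5 I1 h I2.proc
      omega
  refine ⟨h15, ?_⟩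
  rintro S hS hlast v hv rfl
  have hSI1 : S = I1 := by
    rcases hS with rfl | rfl | rfl
    · rw [hI0a] at hv; simp at hv
    · rfl
    · rw [hI5] at hv; simp at hv
  have : ser I5 S := hlast I5 (Or.inr (Or.inr rfl))
    (by rw [hSI1]; subst hI1 hI5; simp)
  rw [hSI1] at this
  exact hser_irrefl I1 (hser_trans I1 I5 I1 h15 this)
end

section
/- In the WMM I²E abstract machine, the IRIW outcome is reachable without Commit fences but unreachable with them: for the program P1: St a 1; P2: r1 = Ld a; Reconcile; r2 = Ld b; P3: St b 1; P4: r3 = Ld b; Reconcile; r4 = Ld a (a ≠ b, initialized to 0), the outcome r1 = 1, r2 = 0, r3 = 1, r4 = 0 is unreachable in WMM. -/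
/-- State of the WMM I²E machine running a program `prog` (processor × index →
operation): atomic memory, store buffers and invalidation buffers (head =
newest), per-processor count of executed instructions, and recorded load
results. -/
structure PSt where
  mem : ℕ → ℕ
  sb : ℕ → Buf
  ib : ℕ → Buf
  cnt : ℕ → ℕ
  res : ℕ → ℕ → ℕ

def setRes (res : ℕ → ℕ → ℕ) (i k v : ℕ) : ℕ → ℕ → ℕ :=
  fun j l => if j = i ∧ l = k then v else res j l

/-- Operations of the WMM I²E abstract machine executing `prog`. -/
inductive PStep (prog : ℕ → ℕ → IOp) : PSt → PSt → Prop
  | nm (s : PSt) (i : ℕ) (h : prog i (s.cnt i) = IOp.nm) :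
      PStep prog s { s with cnt := Function.update s.cnt i (s.cnt i + 1) }
  | store (s : PSt) (i a v : ℕ) (h : prog i (s.cnt i) = IOp.st a v) :
      PStep prog s
        { s with sb := Function.update s.sb i ((a, v) :: s.sb i),
                 ib := Function.update s.ib i (remAddr (s.ib i) a),
                 cnt := Function.update s.cnt i (s.cnt i + 1) }
  | commit (s : PSt) (i : ℕ) (h : prog i (s.cnt i) = IOp.commit)
      (he : s.sb i = []) :
      PStep prog s { s with cnt := Function.update s.cnt i (s.cnt i + 1) }
  | reconcile (s : PSt) (i : ℕ) (h : prog i (s.cnt i) = IOp.reconcile) :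
      PStep prog s
        { s with ib := Function.update s.ib i [],
                 cnt := Function.update s.cnt i (s.cnt i + 1) }
  | ldSb (s : PSt) (i a v : ℕ) (l1 l2 : Buf) (h : prog i (s.cnt i) = IOp.ld a)
      (hsb : s.sb i = l1 ++ (a, v) :: l2) (hy : ¬ hasAddr l1 a) :
      PStep prog s
        { s with res := setRes s.res i (s.cnt i) v,
                 cnt := Function.update s.cnt i (s.cnt i + 1) }
  | ldMem (s : PSt) (i a : ℕ) (h : prog i (s.cnt i) = IOp.ld a)
      (hn : ¬ hasAddr (s.sb i) a) :
      PStep prog s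
        { s with res := setRes s.res i (s.cnt i) (s.mem a),
                 ib := Function.update s.ib i (remAddr (s.ib i) a),
                 cnt := Function.update s.cnt i (s.cnt i + 1) }
  | ldIb (s : PSt) (i a v : ℕ) (l1 l2 : Buf) (h : prog i (s.cnt i) = IOp.ld a)
      (hn : ¬ hasAddr (s.sb i) a) (hib : s.ib i = l1 ++ (a, v) :: l2) :
      PStep prog s
        { s with res := setRes s.res i (s.cnt i) v,
                 ib := Function.update s.ib i (l1 ++ (a, v) :: remAddr l2 a),
                 cnt := Function.update s.cnt i (s.cnt i + 1) }
  | deqSb (s : PSt) (i a v : ℕ) (l1 l2 : Buf)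
      (hsb : s.sb i = l1 ++ (a, v) :: l2) (hold : ¬ hasAddr l2 a) :
      PStep prog s
        { s with mem := Function.update s.mem a v,
                 sb := Function.update s.sb i (l1 ++ l2),
                 ib := fun j => if j = i ∨ hasAddr (s.sb j) a then s.ib j
                                else (a, s.mem a) :: s.ib j }

def PInit (m0 : ℕ → ℕ) : PSt :=
  { mem := m0, sb := fun _ => [], ib := fun _ => [],
    cnt := fun _ => 0, res := fun _ _ => 0 }

/-- The IRIW program with Reconcile fences: P0: St a 1; P1: Ld a; Reconcile;
Ld b; P2: St b 1; P3: Ld b; Reconcile; Ld a. -/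
def iriwProg (a b : ℕ) : ℕ → ℕ → IOp := fun i k =>
  match i, k with
  | 0, 0 => IOp.st a 1
  | 1, 0 => IOp.ld a
  | 1, 1 => IOp.reconcile
  | 1, 2 => IOp.ld b
  | 2, 0 => IOp.st b 1
  | 3, 0 => IOp.ld b
  | 3, 1 => IOp.reconcile
  | 3, 2 => IOp.ld a
  | _, _ => IOp.nm

/-! Memory values only change from `0` to `1`, and every invalidation-buffer entry carries the
stale value `0`. A reader that loads `1` first has read it from memory, so that store was
dequeued before the reader's Reconcile. The Reconcile empties the reader's invalidation buffer,
so its load of the other address can afterwards return `0` only if the other store is dequeued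
after this Reconcile. Whichever reader reconciles second would thus need the store that the
other reader saw in memory before its own Reconcile to be dequeued after the second Reconcile. -/

section iriwProg

variable {a b i k x v : ℕ}

lemma iriwProg_eq_st (h : iriwProg a b i k = .st x v) :
    (i = 0 ∧ k = 0 ∧ x = a ∧ v = 1) ∨ (i = 2 ∧ k = 0 ∧ x = b ∧ v = 1) := by
  unfold iriwProg at h; split at h <;> grind

lemma iriwProg_eq_ld (h : iriwProg a b i k = .ld x) :
    (i = 1 ∧ k = 0 ∧ x = a) ∨ (i = 1 ∧ k = 2 ∧ x = b) ∨
    (i = 3 ∧ k = 0 ∧ x = b) ∨ (i = 3 ∧ k = 2 ∧ x = a) := by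
  unfold iriwProg at h; split at h <;> grind

lemma iriwProg_eq_reconcile (h : iriwProg a b i k = .reconcile) : (i = 1 ∨ i = 3) ∧ k = 1 := by
  unfold iriwProg at h; split at h <;> grind

lemma iriwProg_ne_commit : iriwProg a b i k ≠ .commit := by
  unfold iriwProg; split <;> simp

lemma iriwProg_eq_nm (h : iriwProg a b i k = .nm) :
    (i = 0 ∨ i = 2 → 1 ≤ k) ∧ (i = 1 ∨ i = 3 → 3 ≤ k) := by
  unfold iriwProg at h; split at h <;> grind

end iriwProg

def WriterPhase (s : PSt) (i x : ℕ) : Prop :=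
  (s.cnt i = 0 ∧ s.sb i = [] ∧ s.mem x = 0) ∨
  (1 ≤ s.cnt i ∧ s.sb i = [(x, 1)] ∧ s.mem x = 0) ∨
  (1 ≤ s.cnt i ∧ s.sb i = [] ∧ s.mem x = 1)

lemma WriterPhase.eq_of_sb_eq {s : PSt} {i y x v : ℕ} {l₁ l₂ : Buf} (hw : WriterPhase s i y)
    (hsb : s.sb i = l₁ ++ (x, v) :: l₂) :
    1 ≤ s.cnt i ∧ l₁ = [] ∧ l₂ = [] ∧ x = y ∧ v = 1 ∧ s.mem y = 0 := by
  rcases hw with ⟨-, h, -⟩ | ⟨hc, h, hm⟩ | ⟨-, h, -⟩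
  · simp [h] at hsb
  · rw [h, List.singleton_eq_append_iff] at hsb
    obtain ⟨rfl, ⟨rfl, rfl⟩, rfl⟩ : l₁ = [] ∧ (x = y ∧ v = 1) ∧ l₂ = [] := by simpa using hsb
    exact ⟨hc, rfl, rfl, rfl, rfl, hm⟩
  · simp [h] at hsb

/-- Reader `i` has loaded `1` first, and its load of `y` after the Reconcile has returned `0`
or is still able to return `0`. -/
def SeesNewThenOld (s : PSt) (i y : ℕ) : Prop :=
  s.res i 0 = 1 ∧ ((3 ≤ s.cnt i ∧ s.res i 2 = 0) ∨
    (s.cnt i = 2 ∧ (s.mem y = 0 ∨ hasAddr (s.ib i) y)))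

structure IRIWInv (a b : ℕ) (s : PSt) : Prop where
  sb_eq_nil : ∀ j, j ≠ 0 → j ≠ 2 → s.sb j = []
  writer_a : WriterPhase s 0 a
  writer_b : WriterPhase s 2 b
  ib_stale : ∀ j p, p ∈ s.ib j → p.2 = 0
  mem_a_of_res : 1 ≤ s.cnt 1 → s.res 1 0 = 1 → s.mem a = 1
  mem_b_of_res : 1 ≤ s.cnt 3 → s.res 3 0 = 1 → s.mem b = 1
  not_both : ¬(SeesNewThenOld s 1 b ∧ SeesNewThenOld s 3 a)

lemma IRIWInv.init (a b : ℕ) : IRIWInv a b (PInit fun _ => 0) := by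
  constructor <;> simp [WriterPhase, SeesNewThenOld, PInit]

lemma IRIWInv.step {a b : ℕ} (hab : a ≠ b) {s t : PSt} (I : IRIWInv a b s)
    (hst : PStep (iriwProg a b) s t) : IRIWInv a b t := by
  obtain ⟨hsb, hwa, hwb, hib, hres_a, hres_b, hnot⟩ := I
  cases hst with
  | nm i h =>
    have := iriwProg_eq_nm h
    constructor <;> simp only [WriterPhase, SeesNewThenOld, Function.update_apply] at * <;> grind
  | store i x v h =>
    rcases iriwProg_eq_st h with ⟨rfl, hk, rfl, rfl⟩ | ⟨rfl, hk, rfl, rfl⟩ <;>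
      constructor <;>
      simp only [WriterPhase, SeesNewThenOld, Function.update_apply, remAddr] at * <;> grind
  | commit i h => exact absurd h iriwProg_ne_commit
  | reconcile i h =>
    -- With its ib emptied, the reconciling reader needs the other address to be `0` in memory,
    -- while the other reader, already past its Reconcile, has seen it as `1` there.
    obtain ⟨rfl | rfl, hk⟩ := iriwProg_eq_reconcile h <;>
      constructor <;>
      simp only [WriterPhase, SeesNewThenOld, Function.update_apply, hasAddr] at * <;> grind
  | ldSb i x v l₁ l₂ h hsb' =>
    rcases iriwProg_eq_ld h with ⟨rfl, -⟩ | ⟨rfl, -⟩ | ⟨rfl, -⟩ | ⟨rfl, -⟩ <;> simp [hsb] at hsb'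
  | ldMem i x h =>
    rcases iriwProg_eq_ld h with ⟨rfl, hk, rfl⟩ | ⟨rfl, hk, rfl⟩ | ⟨rfl, hk, rfl⟩ | ⟨rfl, hk, rfl⟩ <;>
      constructor <;>
      simp only [WriterPhase, SeesNewThenOld, Function.update_apply, setRes, remAddr] at * <;> grind
  | ldIb i x v l₁ l₂ h _ hib' =>
    have hsub : l₁ ++ (x, v) :: remAddr l₂ x ⊆ s.ib i :=
      hib' ▸ ((List.filter_sublist.cons_cons _).append_left l₁).subset
    obtain rfl : v = 0 := hib i (x, v) (by simp [hib'])
    rcases iriwProg_eq_ld h with ⟨rfl, hk, rfl⟩ | ⟨rfl, hk, rfl⟩ | ⟨rfl, hk, rfl⟩ | ⟨rfl, hk, rfl⟩ <;>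
      constructor <;>
      simp only [WriterPhase, SeesNewThenOld, Function.update_apply, setRes, hasAddr] at * <;> grind
  | deqSb i x v l₁ l₂ hsb' =>
    obtain rfl | rfl : i = 0 ∨ i = 2 := by
      by_contra! hi
      simp [hsb i hi.1 hi.2] at hsb'
    · obtain ⟨hc, rfl, rfl, rfl, rfl, hm⟩ := hwa.eq_of_sb_eq hsb'
      constructor <;> simp only [WriterPhase, SeesNewThenOld, Function.update_apply, hasAddr] at * <;>
        grind
    · obtain ⟨hc, rfl, rfl, rfl, rfl, hm⟩ := hwb.eq_of_sb_eq hsb'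
      constructor <;> simp only [WriterPhase, SeesNewThenOld, Function.update_apply, hasAddr] at * <;>
        grind

lemma IRIWInv.of_reachable {a b : ℕ} (hab : a ≠ b) {s : PSt}
    (h : Relation.ReflTransGen (PStep (iriwProg a b)) (PInit fun _ => 0) s) : IRIWInv a b s := by
  induction h with
  | refl => exact IRIWInv.init a b
  | tail _ hst I => exact I.step hab hst

/-- in the WMM I²E machine the IRIW outcome
r1 = 1, r2 = 0, r3 = 1, r4 = 0 is unreachable (stores are multi-copy
atomic). -/
theorem wmm_IRIW_forbidden (a b : ℕ) (hab : a ≠ b) :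
    ¬ ∃ s : PSt,
        Relation.ReflTransGen (PStep (iriwProg a b)) (PInit (fun _ => 0)) s ∧
        1 ≤ s.cnt 0 ∧ 3 ≤ s.cnt 1 ∧ 1 ≤ s.cnt 2 ∧ 3 ≤ s.cnt 3 ∧
        s.res 1 0 = 1 ∧ s.res 1 2 = 0 ∧ s.res 3 0 = 1 ∧ s.res 3 2 = 0 := by
  rintro ⟨s, hreach, -, h1, -, h3, r10, r12, r30, r32⟩
  exact (IRIWInv.of_reachable hab hreach).not_both
    ⟨⟨r10, Or.inl ⟨h1, r12⟩⟩, ⟨r30, Or.inl ⟨h3, r32⟩⟩⟩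
end

section
/- Completeness of the WMM I²E model with respect to the WMM axiomatic model: for any relations <_po, <_mo, rf over a finite program's instructions satisfying the WMM Inst-Order and Ld-Val axioms, there exists an execution of the WMM I²E abstract machine of the same program in which every instruction produces the same result (each load returns the value of the same store as specified by rf). -/
/-- The initialization store instruction for address `a` (on the reserved
processor 0). -/
def initInstr (m0 : ℕ → ℕ) (a : ℕ) : Instr := ⟨0, a, IOp.st a (m0 a)⟩

/-!
The run simulates the axiomatic execution. The program instructions are processed in `mo`
order, `D` being the set processed so far. Processing a store executes its processor up to it and
dequeues it at once, so memory always holds the `mo`-latest processed store to each address;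
processing a fence executes its processor up to it; a load or `nm` is executed only when a later
store or fence of its processor, or the end of the run, forces it. Inst-Order guarantees that each
instruction executed this way finds its machine rule enabled (`Ready`). A load returns the value of
its `rf` source: from its store buffer if the source is not yet in memory, from memory if it has not
been overwritten there, and otherwise from its invalidation buffer, which keeps the values of all
such delayed loads, newer entries for later loads (`IbCovers`). Ld-Val rules out every other store
that could stand in the way.
-/

open Function

namespace WmmI2E

def entriesAt (l : Buf) (a : ℕ) : Buf := l.filter (·.1 = a)

@[simp] theorem entriesAt_append (l l' : Buf) (a : ℕ) :
    entriesAt (l ++ l') a = entriesAt l a ++ entriesAt l' a :=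
  List.filter_append ..

@[simp] theorem entriesAt_cons_self (l : Buf) (a v : ℕ) :
    entriesAt ((a, v) :: l) a = (a, v) :: entriesAt l a := by
  simp [entriesAt]

@[simp] theorem entriesAt_cons_of_ne {a b : ℕ} (h : a ≠ b) (l : Buf) (v : ℕ) :
    entriesAt ((a, v) :: l) b = entriesAt l b := by
  simp [entriesAt, h]

@[simp] theorem entriesAt_remAddr_self (l : Buf) (a : ℕ) : entriesAt (remAddr l a) a = [] := by
  simp [entriesAt, remAddr, List.filter_filter]

theorem entriesAt_remAddr_of_ne {a b : ℕ} (h : a ≠ b) (l : Buf) :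
    entriesAt (remAddr l a) b = entriesAt l b := by
  simp only [entriesAt, remAddr, List.filter_filter]
  congr 1
  grind

theorem exists_eq_append_of_getElem?_filter {α : Type*} {p : α → Bool} {l : List α} {n : ℕ}
    {e : α} (h : (l.filter p)[n]? = some e) :
    ∃ l1 l2, l = l1 ++ e :: l2 ∧ l1.filter p = (l.filter p).take n := by
  induction l generalizing n with
  | nil => simp at h
  | cons x xs ih =>
    by_cases hp : p x
    · rw [List.filter_cons_of_pos hp] at h ⊢
      cases n with
      | zero => exact ⟨[], xs, by simpa using h, rfl⟩
      | succ n =>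
        obtain ⟨l1, l2, rfl, hl1⟩ := ih (by simpa using h)
        refine ⟨x :: l1, l2, rfl, ?_⟩
        rw [List.filter_cons_of_pos hp, hl1, List.take_succ_cons]
    · rw [List.filter_cons_of_neg hp] at h ⊢
      obtain ⟨l1, l2, rfl, hl1⟩ := ih h
      exact ⟨x :: l1, l2, rfl, by rw [List.filter_cons_of_neg hp, hl1]⟩

/-- Every load `k` that must return `v` (`P k v`) finds `(a, v)` at position `f k` among the entries
of `l` for `a`; later loads find newer entries (closer to the head). -/
def IbCovers (P : ℕ → ℕ → Prop) (l : Buf) (a : ℕ) : Prop :=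
  ∃ f : ℕ → ℕ, (∀ k v, P k v → (entriesAt l a)[f k]? = some (a, v)) ∧
    ∀ k v k' v', P k v → P k' v' → k ≤ k' → f k' ≤ f k

namespace IbCovers

variable {P Q : ℕ → ℕ → Prop} {l : Buf} {a : ℕ}

theorem of_forall_not (h : ∀ k v, ¬ P k v) : IbCovers P l a :=
  ⟨fun _ => 0, fun k v hk => absurd hk (h k v), fun k v _ _ hk => absurd hk (h k v)⟩

theorem mono (hP : IbCovers P l a) (hQP : ∀ k v, Q k v → P k v) {l' : Buf}
    (hl : entriesAt l' a = entriesAt l a) : IbCovers Q l' a := by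
  obtain ⟨f, hf, hmono⟩ := hP
  exact ⟨f, fun k v hk => hl ▸ hf k v (hQP k v hk),
    fun k v k' v' hk hk' hkk => hmono k v k' v' (hQP k v hk) (hQP k' v' hk') hkk⟩

theorem cons (hP : IbCovers P l a) {w : ℕ}
    (hQ : ∀ k v, Q k v → P k v ∨ (v = w ∧ ∀ k' ≥ k, ∀ v', ¬ P k' v')) :
    IbCovers Q ((a, w) :: l) a := by
  classical
  obtain ⟨f, hf, hmono⟩ := hP
  refine ⟨fun k => if ∃ v, P k v then f k + 1 else 0, fun k v hk => ?_, ?_⟩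
  · dsimp only
    rcases hQ k v hk with hPk | ⟨rfl, hnot⟩
    · rw [if_pos ⟨v, hPk⟩, entriesAt_cons_self]
      exact hf k v hPk
    · rw [if_neg fun ⟨v', h⟩ => hnot k le_rfl v' h, entriesAt_cons_self]
      rfl
  · intro k v k' v' hk hk' hkk
    dsimp only
    split_ifs with h' h
    · exact Nat.succ_le_succ (hmono _ _ _ _ h.choose_spec h'.choose_spec hkk)
    · obtain ⟨v'', h''⟩ := h'
      rcases hQ k v hk with hPk | ⟨-, hnot⟩
      · exact absurd ⟨v, hPk⟩ h
      · exact absurd h'' (hnot k' hkk v'')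
    all_goals omega

/-- Reading `(a, v)` discards the older entries for `a`, which the remaining loads, all later, do
not need. -/
theorem read (hP : IbCovers P l a) {c v : ℕ} (hc : P c v)
    (hQ : ∀ k v', Q k v' → P k v' ∧ c < k) :
    ∃ l1 l2, l = l1 ++ (a, v) :: l2 ∧ IbCovers Q (l1 ++ (a, v) :: remAddr l2 a) a := by
  obtain ⟨f, hf, hmono⟩ := hP
  obtain ⟨l1, l2, rfl, hl1⟩ := exists_eq_append_of_getElem?_filter (hf c v hc)
  have hnew : entriesAt (l1 ++ (a, v) :: remAddr l2 a) a =
      (entriesAt (l1 ++ (a, v) :: l2) a).take (f c + 1) := by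
    have hl1' : entriesAt l1 a = (entriesAt (l1 ++ (a, v) :: l2) a).take (f c) := hl1
    rw [List.take_add_one, hf c v hc, ← hl1']
    simp
  refine ⟨l1, l2, rfl, f, fun k v' hk => ?_, fun k v k' v' hk hk' hkk =>
    hmono k v k' v' (hQ k v hk).1 (hQ k' v' hk').1 hkk⟩
  obtain ⟨hPk, hck⟩ := hQ k v' hk
  rw [hnew, List.getElem?_take_of_lt (Nat.lt_succ_of_le (hmono c v k v' hc hPk hck.le))]
  exact hf k v' hPk

end IbCovers

def _root_.IOp.IsStoreOrFence : IOp → Prop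
  | .st _ _ | .commit | .reconcile => True
  | _ => False

theorem ordTable_of_isStoreOrFence {o o' : IOp} (hst : ∀ a v, o ≠ .st a v) (hnm : o ≠ .nm)
    (ho' : o'.IsStoreOrFence) : ordTable o o' := by
  cases o <;> cases o' <;> simp_all [ordTable, IOp.IsStoreOrFence]

structure CandidateExec where
  N : ℕ
  len : ℕ → ℕ
  prog : ℕ → ℕ → IOp
  m0 : ℕ → ℕ
  mo : Instr → Instr → Prop
  rf : Instr → Instr → Prop

namespace CandidateExec

variable (E : CandidateExec)

def progInstrs : Finset Instr :=
  (Finset.Icc 1 E.N).biUnion fun i => (Finset.range (E.len i)).image fun k => ⟨i, k, E.prog i k⟩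

def instrs : Set Instr :=
  { x | (1 ≤ x.proc ∧ x.proc ≤ E.N ∧ x.idx < E.len x.proc ∧ x.op = E.prog x.proc x.idx) ∨
        ∃ a, x = initInstr E.m0 a }

structure IsWmm : Prop where
  irrefl : ∀ x, ¬ E.mo x x
  trans : ∀ x y z, E.mo x y → E.mo y z → E.mo x z
  total : ∀ x ∈ E.instrs, ∀ y ∈ E.instrs, x ≠ y → E.mo x y ∨ E.mo y x
  init_mo : ∀ a, ∀ x ∈ E.instrs, (isStoreTo a x ∨ isLoadOf a x) →
    x ≠ initInstr E.m0 a → E.mo (initInstr E.m0 a) x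
  instOrder : ∀ x ∈ E.instrs, ∀ y ∈ E.instrs, po x y → ordTable x.op y.op → E.mo x y
  rf_mem : ∀ S L, E.rf S L → S ∈ E.instrs ∧ L ∈ E.instrs
  rf_total : ∀ L ∈ E.instrs, ∀ a, L.op = IOp.ld a → ∃ S, E.rf S L
  ldVal : ∀ S L a, E.rf S L → L.op = IOp.ld a →
    isStoreTo a S ∧ (E.mo S L ∨ po S L) ∧
    ∀ S' ∈ E.instrs, isStoreTo a S' → (E.mo S' L ∨ po S' L) → S' = S ∨ E.mo S' S

def sbEntry (D : Finset Instr) (i k : ℕ) : Option (ℕ × ℕ) :=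
  match E.prog i k with
  | .st a v => if (⟨i, k, .st a v⟩ : Instr) ∈ D then none else some (a, v)
  | _ => none

/-- The store buffer of processor `i` once it has executed `n` instructions and the stores in `D`
have been dequeued: its other stores, newest first. -/
def sbSpec (D : Finset Instr) (i n : ℕ) : Buf :=
  (List.range n).reverse.filterMap (E.sbEntry D i)

structure IsMoPrefix (D : Finset Instr) : Prop where
  subset : D ⊆ E.progInstrs
  mo_of_not_mem : ∀ X ∈ D, ∀ Y ∈ E.progInstrs, Y ∉ D → E.mo X Y

structure IsNext (D : Finset Instr) (Z : Instr) : Prop where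
  mem : Z ∈ E.progInstrs
  not_mem : Z ∉ D
  mo_of_ne : ∀ W ∈ E.progInstrs, W ∉ D → W ≠ Z → E.mo Z W

/-- The stores in memory once the instructions of `D` are processed. -/
def Visible (D : Finset Instr) (a : ℕ) (S : Instr) : Prop := S ∈ D ∨ S = initInstr E.m0 a

def Overwritten (D : Finset Instr) (a : ℕ) (S : Instr) : Prop :=
  ∃ W ∈ D, isStoreTo a W ∧ E.mo S W

/-- The load `⟨i, k, ld a⟩` is processed but not yet executed (`cnt` counts the executed
instructions of each processor), and its source `S` is in memory. -/
structure Pending (D : Finset Instr) (cnt : ℕ → ℕ) (i a k : ℕ) (S : Instr) (v : ℕ) : Prop where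
  cnt_le : cnt i ≤ k
  mem : (⟨i, k, .ld a⟩ : Instr) ∈ D
  rf : E.rf S ⟨i, k, .ld a⟩
  op : S.op = .st a v
  visible : E.Visible D a S

/-- A pending load whose value has left memory: it must find `v` in the invalidation buffer. -/
def Stale (D : Finset Instr) (cnt : ℕ → ℕ) (i a k v : ℕ) : Prop :=
  ∃ S, E.Pending D cnt i a k S v ∧ E.Overwritten D a S

def ResOk (cnt : ℕ → ℕ) (res : ℕ → ℕ → ℕ) : Prop :=
  ∀ i k a S v, k < cnt i → E.prog i k = .ld a → E.rf S ⟨i, k, .ld a⟩ → S.op = .st a v →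
    res i k = v

structure Inv (D : Finset Instr) (s : PSt) : Prop where
  isMoPrefix : E.IsMoPrefix D
  cnt_le : ∀ i, s.cnt i ≤ if 1 ≤ i ∧ i ≤ E.N then E.len i else 0
  mem : ∀ a S v, E.Visible D a S → ¬ E.Overwritten D a S → S.op = .st a v → s.mem a = v
  sb : ∀ i, s.sb i = E.sbSpec D i (s.cnt i)
  res : E.ResOk s.cnt s.res
  ib : ∀ i a, IbCovers (E.Stale D s.cnt i a) (s.ib i) a

def SfExecuted (D : Finset Instr) (cnt : ℕ → ℕ) : Prop :=
  ∀ X ∈ D, X.op.IsStoreOrFence → X.idx < cnt X.proc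

/-- What the processed set `D` requires of the next instruction `X` of a processor for it to be
executed without breaking `Inv`. -/
def Ready (D : Finset Instr) (X : Instr) : Prop :=
  match X.op with
  | .ld _ => X ∈ D
  | .st _ _ => X ∉ D
  | .commit => X ∈ D
  | .reconcile => ∀ W ∈ D, ¬ E.mo X W
  | .nm => True

variable {E} {D : Finset Instr} {cnt : ℕ → ℕ} {s : PSt} {i a k v p b : ℕ} {S Z : Instr}

theorem mem_progInstrs {X : Instr} :
    X ∈ E.progInstrs ↔
      1 ≤ X.proc ∧ X.proc ≤ E.N ∧ X.idx < E.len X.proc ∧ X.op = E.prog X.proc X.idx := by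
  obtain ⟨i, k, o⟩ := X
  simp only [progInstrs, Finset.mem_biUnion, Finset.mem_Icc, Finset.mem_image,
    Finset.mem_range, Instr.mk.injEq]
  constructor
  · rintro ⟨i, hi, k, hk, rfl, rfl, rfl⟩
    exact ⟨hi.1, hi.2, hk, rfl⟩
  · rintro ⟨h1, h2, hk, rfl⟩
    exact ⟨i, ⟨h1, h2⟩, k, hk, rfl, rfl, rfl⟩

theorem mk_mem_progInstrs (hi : 1 ≤ i ∧ i ≤ E.N) (hk : k < E.len i) :
    (⟨i, k, E.prog i k⟩ : Instr) ∈ E.progInstrs :=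
  mem_progInstrs.2 ⟨hi.1, hi.2, hk, rfl⟩

theorem mem_instrs_of_mem_progInstrs {X : Instr} (h : X ∈ E.progInstrs) : X ∈ E.instrs :=
  Or.inl (mem_progInstrs.1 h)

theorem ne_initInstr_of_mem_progInstrs {X : Instr} (h : X ∈ E.progInstrs) (a : ℕ) :
    X ≠ initInstr E.m0 a := by
  rintro rfl
  simp [mem_progInstrs, initInstr] at h

namespace IsWmm

variable (H : E.IsWmm)
include H

theorem asymm {x y : Instr} (h : E.mo x y) : ¬ E.mo y x :=
  fun h' => H.irrefl x (H.trans x y x h h')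

theorem exists_mo_least (R : Finset Instr) (hne : R.Nonempty) (hR : ∀ x ∈ R, x ∈ E.instrs) :
    ∃ z ∈ R, ∀ w ∈ R, w ≠ z → E.mo z w := by
  classical
  induction R using Finset.induction_on with
  | empty => exact absurd hne Finset.not_nonempty_empty
  | @insert x R hx ih =>
    rcases R.eq_empty_or_nonempty with rfl | hR'
    · exact ⟨x, by simp, by simp⟩
    obtain ⟨z, hz, hzmin⟩ := ih hR' fun y hy => hR y (Finset.mem_insert_of_mem hy)
    have hxz : x ≠ z := fun h => hx (h ▸ hz)
    rcases H.total x (hR x (Finset.mem_insert_self x R)) z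
        (hR z (Finset.mem_insert_of_mem hz)) hxz with h | h
    · refine ⟨x, Finset.mem_insert_self x R, fun w hw hwx => ?_⟩
      rcases Finset.mem_insert.1 hw with rfl | hw
      · exact absurd rfl hwx
      rcases eq_or_ne w z with rfl | hwz
      · exact h
      · exact H.trans _ _ _ h (hzmin w hw hwz)
    · refine ⟨z, Finset.mem_insert_of_mem hz, fun w hw hwz => ?_⟩
      rcases Finset.mem_insert.1 hw with rfl | hw
      · exact h
      · exact hzmin w hw hwz

theorem init_mo_of_mem_progInstrs {X : Instr} (hX : X ∈ E.progInstrs)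
    (hst : isStoreTo a X) : E.mo (initInstr E.m0 a) X :=
  H.init_mo a X (mem_instrs_of_mem_progInstrs hX) (Or.inl hst) (ne_initInstr_of_mem_progInstrs hX a)

theorem rf_unique {S' L : Instr} (h : E.rf S L) (h' : E.rf S' L)
    (hL : L.op = IOp.ld a) : S = S' := by
  obtain ⟨hst, hrel, hmax⟩ := H.ldVal S L a h hL
  obtain ⟨hst', hrel', hmax'⟩ := H.ldVal S' L a h' hL
  rcases hmax S' (H.rf_mem S' L h').1 hst' hrel' with h1 | h1
  · exact h1.symm
  rcases hmax' S (H.rf_mem S L h).1 hst hrel with h2 | h2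
  · exact h2
  · exact absurd h1 (H.asymm h2)

theorem eq_or_mo_of_po_store {W : Instr} (hrf : E.rf S ⟨i, k, IOp.ld a⟩)
    (hW : W ∈ E.instrs) (hWst : isStoreTo a W) (hpo : po W ⟨i, k, IOp.ld a⟩) :
    W = S ∨ E.mo W S :=
  (H.ldVal S _ a hrf rfl).2.2 W hW hWst (Or.inr hpo)

theorem rf_mono {k' : ℕ} {S' : Instr} (hk : k ≤ k')
    (h : E.rf S ⟨i, k, IOp.ld a⟩) (h' : E.rf S' ⟨i, k', IOp.ld a⟩) :
    S = S' ∨ E.mo S S' := by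
  rcases hk.lt_or_eq with hk | rfl
  · obtain ⟨hst, hrel, -⟩ := H.ldVal S _ a h rfl
    have hL := (H.rf_mem S _ h).2
    have hLL : E.mo ⟨i, k, IOp.ld a⟩ ⟨i, k', IOp.ld a⟩ :=
      H.instOrder _ hL _ (H.rf_mem S' _ h').2 ⟨rfl, hk⟩ rfl
    refine (H.ldVal S' _ a h' rfl).2.2 S (H.rf_mem S _ h).1 hst ?_
    exact hrel.imp (fun h1 => H.trans _ _ _ h1 hLL) fun h1 => ⟨h1.1, h1.2.trans hk⟩
  · exact Or.inl (H.rf_unique h h' rfl)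

end IsWmm

theorem sbEntry_eq_some :
    E.sbEntry D i k = some (a, v) ↔ E.prog i k = .st a v ∧ (⟨i, k, .st a v⟩ : Instr) ∉ D := by
  unfold sbEntry
  split
  · split_ifs <;> aesop
  · aesop

theorem sbEntry_eq_none (h : ∀ a v, E.prog i k ≠ .st a v) : E.sbEntry D i k = none :=
  Option.eq_none_iff_forall_ne_some.2 fun _ he => h _ _ (sbEntry_eq_some.1 he).1

theorem sbEntry_insert {p : ℕ} (h : ∀ a v, (⟨p, k, .st a v⟩ : Instr) ≠ Z) :
    E.sbEntry (insert Z D) p k = E.sbEntry D p k := by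
  unfold sbEntry
  split <;> simp only [Finset.mem_insert, h, false_or]

theorem mem_sbSpec {n : ℕ} :
    (a, v) ∈ E.sbSpec D i n ↔ ∃ k < n, E.prog i k = .st a v ∧ (⟨i, k, .st a v⟩ : Instr) ∉ D := by
  simp [sbSpec, sbEntry_eq_some]

theorem sbSpec_succ_of_not_store {n : ℕ} (h : ∀ a v, E.prog i n ≠ .st a v) :
    E.sbSpec D i (n + 1) = E.sbSpec D i n := by
  rw [sbSpec, List.range_succ, List.reverse_append, List.filterMap_append, sbSpec]
  simp [sbEntry_eq_none h]

theorem sbSpec_succ_of_store {n : ℕ} (h : E.prog i n = .st a v)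
    (hD : (⟨i, n, .st a v⟩ : Instr) ∉ D) :
    E.sbSpec D i (n + 1) = (a, v) :: E.sbSpec D i n := by
  rw [sbSpec, List.range_succ, List.reverse_append, List.filterMap_append, sbSpec]
  simp [(sbEntry_eq_some (D := D)).2 ⟨h, hD⟩]

theorem sbSpec_insert {p n : ℕ} (h : ∀ k a v, (⟨p, k, .st a v⟩ : Instr) ≠ Z) :
    E.sbSpec (insert Z D) p n = E.sbSpec D p n :=
  List.filterMap_congr fun k _ => sbEntry_insert (h k)

theorem sbSpec_split {n : ℕ} (hk : k < n) (hst : E.prog i k = .st a v)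
    (hD : (⟨i, k, .st a v⟩ : Instr) ∉ D) :
    ∃ l1 l2, E.sbSpec D i n = l1 ++ (a, v) :: l2 ∧
      E.sbSpec (insert ⟨i, k, .st a v⟩ D) i n = l1 ++ l2 ∧
      (∀ e ∈ l1, ∃ k', k < k' ∧ k' < n ∧ E.sbEntry D i k' = some e) ∧
      (∀ e ∈ l2, ∃ k' < k, E.sbEntry D i k' = some e) := by
  set r1 := (List.range' (k + 1) (n - (k + 1))).reverse
  have hrange : (List.range n).reverse = r1 ++ k :: (List.range k).reverse := by
    simp only [r1]
    obtain ⟨m, rfl⟩ := Nat.exists_eq_add_of_lt hk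
    rw [show k + m + 1 - (k + 1) = m by omega, show k + m + 1 = k + 1 + m by omega,
      List.range_add, List.range_succ, List.range'_eq_map_range]
    simp
  have hins : ∀ k' ≠ k, E.sbEntry (insert ⟨i, k, .st a v⟩ D) i k' = E.sbEntry D i k' :=
    fun k' hk' => sbEntry_insert fun _ _ h => hk' (congrArg Instr.idx h)
  have hZ : E.sbEntry (insert ⟨i, k, .st a v⟩ D) i k = none := by
    simp [sbEntry, hst]
  refine ⟨r1.filterMap (E.sbEntry D i), (List.range k).reverse.filterMap (E.sbEntry D i), ?_, ?_,
    ?_, ?_⟩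
  · rw [sbSpec, hrange, List.filterMap_append, List.filterMap_cons,
      (sbEntry_eq_some (D := D)).2 ⟨hst, hD⟩]
  · rw [sbSpec, hrange, List.filterMap_append, List.filterMap_cons, hZ]
    congr 1 <;> refine List.filterMap_congr fun k' hk' => hins k' ?_
    · simp [r1] at hk'; omega
    · simp at hk'; omega
  · intro e he
    obtain ⟨k', hk', he⟩ := List.mem_filterMap.1 he
    simp only [r1, List.mem_reverse, List.mem_range'_1] at hk'
    exact ⟨k', by omega, by omega, he⟩
  · intro e he
    obtain ⟨k', hk', he⟩ := List.mem_filterMap.1 he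
    exact ⟨k', by simpa using hk', he⟩

theorem IsMoPrefix.insert (hD : E.IsMoPrefix D) (hZ : E.IsNext D Z) :
    E.IsMoPrefix (insert Z D) := by
  refine ⟨Finset.insert_subset hZ.mem hD.subset, fun X hX Y hY hYD => ?_⟩
  rw [Finset.mem_insert, not_or] at hYD
  rcases Finset.mem_insert.1 hX with rfl | hX
  · exact hZ.mo_of_ne Y hY hYD.2 hYD.1
  · exact hD.mo_of_not_mem X hX Y hY hYD.2

theorem Stale.of_le {cnt' : ℕ → ℕ} (h : E.Stale D cnt' i a k v)
    (hle : cnt i ≤ cnt' i) : E.Stale D cnt i a k v :=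
  let ⟨S, hp, hS⟩ := h
  ⟨S, { hp with cnt_le := hle.trans hp.cnt_le }, hS⟩

theorem Stale.cnt_le (h : E.Stale D cnt i a k v) : cnt i ≤ k :=
  h.choose_spec.1.cnt_le

theorem mem_progInstrs_of_not_visible (hS : S ∈ E.instrs) (hop : S.op = .st a v)
    (hvis : ¬ E.Visible D a S) : S ∈ E.progInstrs := by
  rcases hS with hS | ⟨b, rfl⟩
  · exact mem_progInstrs.2 hS
  · obtain ⟨rfl, -⟩ := IOp.st.inj hop
    exact absurd (Or.inr rfl) hvis

theorem Inv.cnt_le_len (hC : E.Inv D s) (hi : 1 ≤ i ∧ i ≤ E.N) : s.cnt i ≤ E.len i := by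
  simpa [hi] using hC.cnt_le i

theorem Pending.po_store_mem (hp : E.Pending D cnt i a k S v) (H : E.IsWmm) (hD : E.IsMoPrefix D)
    {k' w : ℕ} (hW : (⟨i, k', .st a w⟩ : Instr) ∈ E.progInstrs) (hk' : k' < k) :
    (⟨i, k', .st a w⟩ : Instr) ∈ D := by
  by_contra hWD
  rcases H.eq_or_mo_of_po_store hp.rf (mem_instrs_of_mem_progInstrs hW) ⟨w, rfl⟩ ⟨rfl, hk'⟩
    with rfl | hmo
  · rcases hp.visible with hS | hS
    · exact hWD hS
    · exact ne_initInstr_of_mem_progInstrs hW a hS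
  · refine H.asymm hmo ?_
    rcases hp.visible with hS | rfl
    · exact hD.mo_of_not_mem S hS _ hW hWD
    · exact H.init_mo_of_mem_progInstrs hW ⟨w, rfl⟩

theorem Pending.not_hasAddr_sbSpec (hp : E.Pending D cnt i a k S v) (H : E.IsWmm)
    (hD : E.IsMoPrefix D) (hcnt : cnt i ≤ E.len i) :
    ¬ hasAddr (E.sbSpec D i (cnt i)) a := by
  simp only [hasAddr, List.mem_map, Prod.exists, exists_and_right, exists_eq_right]
  rintro ⟨w, hw⟩
  obtain ⟨k', hk', hst, hWD⟩ := mem_sbSpec.1 hw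
  have hi := mem_progInstrs.1 (hD.subset hp.mem)
  refine hWD (hp.po_store_mem H hD ?_ (hk'.trans_le hp.cnt_le))
  exact mem_progInstrs.2 ⟨hi.1, hi.2.1, hk'.trans_le hcnt, hst.symm⟩

theorem IsWmm.not_stale_of_not_overwritten (H : E.IsWmm) (hD : E.IsMoPrefix D) {k' : ℕ}
    (hrf : E.rf S ⟨i, k, .ld a⟩) (hS : E.Visible D a S) (hSD : ¬ E.Overwritten D a S)
    (hk : k ≤ k') : ¬ E.Stale D cnt i a k' v := by
  rintro ⟨S', hp, W, hW, hWst, hmo⟩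
  rcases H.rf_mono hk hrf hp.rf with rfl | hSS'
  · exact hSD ⟨W, hW, hWst, hmo⟩
  rcases hp.visible with hS' | rfl
  · exact hSD ⟨S', hS', ⟨v, hp.op⟩, hSS'⟩
  rcases hS with hS | rfl
  · exact H.asymm hSS' (H.init_mo_of_mem_progInstrs (hD.subset hS) (H.ldVal S _ a hrf rfl).1)
  · exact H.irrefl _ hSS'

theorem Stale.of_insert (h : E.Stale (insert Z D) cnt p b k v) (H : E.IsWmm)
    (hD : E.IsMoPrefix D) (hZ : E.IsNext D Z) :
    E.Stale D cnt p b k v ∨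
      ∃ S, E.Pending D cnt p b k S v ∧ isStoreTo b Z ∧ ¬ E.Overwritten D b S := by
  obtain ⟨S, hp, W, hW, hWst, hSW⟩ := h
  have hmoZ : ∀ X ∈ D, E.mo X Z := fun X hX => hD.mo_of_not_mem X hX Z hZ.mem hZ.not_mem
  have hSZ : S ≠ Z := by
    rintro rfl
    rcases Finset.mem_insert.1 hW with rfl | hW
    · exact H.irrefl _ hSW
    · exact H.asymm hSW (hmoZ W hW)
  have hL : (⟨p, k, .ld b⟩ : Instr) ∈ D := by
    refine (Finset.mem_insert.1 hp.mem).resolve_left fun hLZ => ?_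
    have hWD : W ∈ D := (Finset.mem_insert.1 hW).resolve_left fun h => by
      obtain ⟨w, hw⟩ := hWst
      rw [h, ← hLZ] at hw
      cases hw
    rcases (H.ldVal S _ b hp.rf rfl).2.2 W (mem_instrs_of_mem_progInstrs (hD.subset hWD)) hWst
        (Or.inl (hLZ ▸ hmoZ W hWD)) with rfl | hWS
    · exact H.irrefl _ hSW
    · exact H.asymm hSW hWS
  have hp' : E.Pending D cnt p b k S v :=
    { hp with
      mem := hL
      visible := hp.visible.imp_left fun h => (Finset.mem_insert.1 h).resolve_left hSZ }
  by_cases hO : E.Overwritten D b S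
  · exact Or.inl ⟨S, hp', hO⟩
  refine Or.inr ⟨S, hp', ?_, hO⟩
  rcases Finset.mem_insert.1 hW with rfl | hW
  · exact hWst
  · exact absurd ⟨W, hW, hWst, hSW⟩ hO

theorem le_update_succ (cnt : ℕ → ℕ) (i j : ℕ) : cnt j ≤ update cnt i (cnt i + 1) j := by
  rcases eq_or_ne j i with rfl | h <;> simp [*]

theorem ResOk.update_of_not_load {res : ℕ → ℕ → ℕ} (h : E.ResOk cnt res)
    (hnl : ∀ a, E.prog i (cnt i) ≠ .ld a) : E.ResOk (update cnt i (cnt i + 1)) res := by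
  intro j k a S v hk hop
  rcases eq_or_ne j i with rfl | hj
  · rw [update_self] at hk
    rcases (Nat.lt_succ_iff_lt_or_eq.1 hk) with hk | rfl
    · exact h j k a S v hk hop
    · exact absurd hop (hnl a)
  · rw [update_of_ne hj] at hk
    exact h j k a S v hk hop

theorem ResOk.update_setRes {res : ℕ → ℕ → ℕ} (h : E.ResOk cnt res) (H : E.IsWmm)
    (hop : E.prog i (cnt i) = .ld a) (hrf : E.rf S ⟨i, cnt i, .ld a⟩) (hS : S.op = .st a v) :
    E.ResOk (update cnt i (cnt i + 1)) (setRes res i (cnt i) v) := by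
  intro j k b S' v' hk hop' hrf' hS'
  unfold setRes
  split_ifs with hjk
  · obtain ⟨rfl, rfl⟩ := hjk
    obtain rfl : b = a := by rw [hop] at hop'; exact (IOp.ld.inj hop').symm
    obtain rfl := H.rf_unique hrf hrf' rfl
    rw [hS] at hS'
    exact (IOp.st.inj hS').2
  · refine h j k b S' v' ?_ hop' hrf' hS'
    rcases eq_or_ne j i with rfl | hj
    · rw [update_self] at hk
      exact lt_of_le_of_ne (Nat.lt_succ_iff.1 hk) fun h => hjk ⟨rfl, h⟩
    · rwa [update_of_ne hj] at hk

namespace Inv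

section

variable (hC : E.Inv D s)
include hC

theorem of_step (hi : 1 ≤ i ∧ i ≤ E.N) (hk : s.cnt i < E.len i) {s' : PSt}
    (hcnt : s'.cnt = update s.cnt i (s.cnt i + 1)) (hmem : s'.mem = s.mem)
    (hsb : ∀ p, s'.sb p = E.sbSpec D p (s'.cnt p)) (hres : E.ResOk s'.cnt s'.res)
    (hib : ∀ p b, IbCovers (E.Stale D s'.cnt p b) (s'.ib p) b) : E.Inv D s' := by
  refine ⟨hC.isMoPrefix, fun j => ?_, hmem ▸ hC.mem, hsb, hres, hib⟩
  rw [hcnt]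
  rcases eq_or_ne j i with rfl | hj
  · simpa [hi] using hk
  · simpa [hj] using hC.cnt_le j

theorem sb_eq_of_not_store (h : ∀ a v, E.prog i (s.cnt i) ≠ .st a v) (p : ℕ) :
    s.sb p = E.sbSpec D p (update s.cnt i (s.cnt i + 1) p) := by
  rcases eq_or_ne p i with rfl | hp
  · rw [update_self, sbSpec_succ_of_not_store h, hC.sb]
  · rw [update_of_ne hp, hC.sb]

theorem ib_update_succ (p b : ℕ) :
    IbCovers (E.Stale D (update s.cnt i (s.cnt i + 1)) p b) (s.ib p) b :=
  (hC.ib p b).mono (fun _ _ h => h.of_le (le_update_succ _ _ _)) rfl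

theorem ib_update {l : Buf} (hl : ∀ b, IbCovers (E.Stale D (update s.cnt i (s.cnt i + 1)) i b) l b)
    (p b : ℕ) : IbCovers (E.Stale D (update s.cnt i (s.cnt i + 1)) p b) (update s.ib i l p) b := by
  rcases eq_or_ne p i with rfl | hp
  · rw [update_self]; exact hl b
  · rw [update_of_ne hp]; exact hC.ib_update_succ p b

end

section

variable (hC : E.Inv D s) (hi : 1 ≤ i ∧ i ≤ E.N) (hk : s.cnt i < E.len i)
include hC hi hk

theorem exists_step_nm (hop : E.prog i (s.cnt i) = .nm) :
    ∃ s', PStep E.prog s s' ∧ E.Inv D s' ∧ s'.cnt = update s.cnt i (s.cnt i + 1) :=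
  ⟨_, .nm s i hop, hC.of_step hi hk rfl rfl (hC.sb_eq_of_not_store (by simp [hop]))
    (hC.res.update_of_not_load (by simp [hop])) hC.ib_update_succ, rfl⟩

/-- A commit is processed after every earlier store of its processor, so its store buffer is
empty. -/
theorem exists_step_commit (H : E.IsWmm) (hop : E.prog i (s.cnt i) = .commit)
    (hX : (⟨i, s.cnt i, .commit⟩ : Instr) ∈ D) :
    ∃ s', PStep E.prog s s' ∧ E.Inv D s' ∧ s'.cnt = update s.cnt i (s.cnt i + 1) := by
  have hsb : s.sb i = [] := by
    rw [hC.sb, List.eq_nil_iff_forall_not_mem]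
    rintro ⟨a, w⟩ hw
    obtain ⟨k', hk', hst, hWD⟩ := mem_sbSpec.1 hw
    have hW : (⟨i, k', .st a w⟩ : Instr) ∈ E.progInstrs :=
      mem_progInstrs.2 ⟨hi.1, hi.2, hk'.trans hk, hst.symm⟩
    refine H.asymm (hC.isMoPrefix.mo_of_not_mem _ hX _ hW hWD) ?_
    exact H.instOrder _ (mem_instrs_of_mem_progInstrs hW) _
      (mem_instrs_of_mem_progInstrs (hC.isMoPrefix.subset hX)) ⟨rfl, hk'⟩ trivial
  exact ⟨_, .commit s i hop hsb, hC.of_step hi hk rfl rfl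
    (hC.sb_eq_of_not_store (by simp [hop])) (hC.res.update_of_not_load (by simp [hop]))
    hC.ib_update_succ, rfl⟩

/-- Processed loads after the reconcile would be `mo`-after it, so none is pending. -/
theorem exists_step_reconcile (H : E.IsWmm) (hop : E.prog i (s.cnt i) = .reconcile)
    (hX : ∀ W ∈ D, ¬ E.mo ⟨i, s.cnt i, .reconcile⟩ W) :
    ∃ s', PStep E.prog s s' ∧ E.Inv D s' ∧ s'.cnt = update s.cnt i (s.cnt i + 1) := by
  refine ⟨_, .reconcile s i hop, hC.of_step hi hk rfl rfl
    (hC.sb_eq_of_not_store (by simp [hop])) (hC.res.update_of_not_load (by simp [hop]))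
    (hC.ib_update fun b => IbCovers.of_forall_not ?_), rfl⟩
  rintro k v ⟨S, hp, -⟩
  have hR : (⟨i, s.cnt i, .reconcile⟩ : Instr) ∈ E.progInstrs := hop ▸ mk_mem_progInstrs hi hk
  refine hX _ hp.mem (H.instOrder _ (mem_instrs_of_mem_progInstrs hR) _
    (mem_instrs_of_mem_progInstrs (hC.isMoPrefix.subset hp.mem)) ⟨rfl, ?_⟩ trivial)
  simpa using hp.cnt_le

/-- No later load can read an older store to the address, so clearing it from the invalidation
buffer loses nothing. -/
theorem exists_step_store (H : E.IsWmm) (hop : E.prog i (s.cnt i) = .st a v)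
    (hX : (⟨i, s.cnt i, .st a v⟩ : Instr) ∉ D) :
    ∃ s', PStep E.prog s s' ∧ E.Inv D s' ∧ s'.cnt = update s.cnt i (s.cnt i + 1) := by
  refine ⟨_, .store s i a v hop, hC.of_step hi hk rfl rfl (fun p => ?_)
    (hC.res.update_of_not_load (by simp [hop])) (hC.ib_update fun b => ?_), rfl⟩
  · rcases eq_or_ne p i with rfl | hp
    · simp only [update_self]
      rw [sbSpec_succ_of_store hop hX, hC.sb]
    · simp only [update_of_ne hp]
      exact hC.sb p
  · rcases eq_or_ne b a with rfl | hba
    · refine IbCovers.of_forall_not ?_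
      rintro k w ⟨S, hp, -⟩
      refine hX (hp.po_store_mem H hC.isMoPrefix (hop ▸ mk_mem_progInstrs hi hk) ?_)
      simpa using hp.cnt_le
    · exact (hC.ib_update_succ i b).mono (fun _ _ => id) (entriesAt_remAddr_of_ne hba.symm _)

theorem exists_step_ldMem (H : E.IsWmm) (hop : E.prog i (s.cnt i) = .ld a)
    (hp : E.Pending D s.cnt i a (s.cnt i) S v) (hO : ¬ E.Overwritten D a S) :
    ∃ s', PStep E.prog s s' ∧ E.Inv D s' ∧ s'.cnt = update s.cnt i (s.cnt i + 1) := by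
  have hmem : s.mem a = v := hC.mem a S v hp.visible hO hp.op
  have hnsb : ¬ hasAddr (s.sb i) a :=
    hC.sb i ▸ hp.not_hasAddr_sbSpec H hC.isMoPrefix (hC.cnt_le_len hi)
  refine ⟨_, .ldMem s i a hop hnsb, hC.of_step hi hk rfl rfl
    (hC.sb_eq_of_not_store (by simp [hop])) ?_ (hC.ib_update fun b => ?_), rfl⟩
  · exact hC.res.update_setRes H hop hp.rf (hmem ▸ hp.op)
  · rcases eq_or_ne b a with rfl | hba
    · refine IbCovers.of_forall_not (fun k w hst => ?_)
      refine H.not_stale_of_not_overwritten hC.isMoPrefix hp.rf hp.visible hO ?_ hst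
      exact (Nat.le_succ _).trans (by simpa using hst.cnt_le)
    · exact (hC.ib_update_succ i b).mono (fun _ _ => id) (entriesAt_remAddr_of_ne hba.symm _)

theorem exists_step_ldIb (H : E.IsWmm) (hop : E.prog i (s.cnt i) = .ld a)
    (hp : E.Pending D s.cnt i a (s.cnt i) S v) (hO : E.Overwritten D a S) :
    ∃ s', PStep E.prog s s' ∧ E.Inv D s' ∧ s'.cnt = update s.cnt i (s.cnt i + 1) := by
  have hnsb : ¬ hasAddr (s.sb i) a :=
    hC.sb i ▸ hp.not_hasAddr_sbSpec H hC.isMoPrefix (hC.cnt_le_len hi)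
  obtain ⟨l1, l2, hl, hib⟩ := (hC.ib i a).read (Q := E.Stale D (update s.cnt i (s.cnt i + 1)) i a)
    ⟨S, hp, hO⟩ fun k w hst => ⟨hst.of_le (le_update_succ _ _ _), by simpa using hst.cnt_le⟩
  refine ⟨_, .ldIb s i a v l1 l2 hop hnsb hl, hC.of_step hi hk rfl rfl
    (hC.sb_eq_of_not_store (by simp [hop])) (hC.res.update_setRes H hop hp.rf hp.op)
    (hC.ib_update fun b => ?_), rfl⟩
  rcases eq_or_ne b a with rfl | hba
  · exact hib
  · refine (hC.ib_update_succ i b).mono (fun _ _ => id) ?_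
    rw [hl]
    simp [entriesAt_cons_of_ne hba.symm, entriesAt_remAddr_of_ne hba.symm]

/-- A source not yet in memory is `mo`-after the load, hence before it in program order, and by
Ld-Val and Inst-Order no store to the same address lies in between. -/
theorem exists_sb_forward (H : E.IsWmm) (hX : (⟨i, s.cnt i, .ld a⟩ : Instr) ∈ D)
    (hrf : E.rf S ⟨i, s.cnt i, .ld a⟩) (hS : S.op = .st a v) (hvis : ¬ E.Visible D a S) :
    ∃ l1 l2, s.sb i = l1 ++ (a, v) :: l2 ∧ ¬ hasAddr l1 a := by
  have hSI := (H.rf_mem _ _ hrf).1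
  have hSP := mem_progInstrs_of_not_visible hSI hS hvis
  have hpo : po S ⟨i, s.cnt i, .ld a⟩ := ((H.ldVal _ _ a hrf rfl).2.1).resolve_left
    (H.asymm (hC.isMoPrefix.mo_of_not_mem _ hX S hSP fun h => hvis (Or.inl h)))
  obtain ⟨⟨j, z, o⟩, rfl⟩ : ∃ S', S = S' := ⟨S, rfl⟩
  obtain ⟨hj : j = i, hz : z < s.cnt i⟩ := hpo
  subst j
  obtain rfl : o = .st a v := hS
  obtain ⟨l1, l2, hsb, -, hl1, -⟩ := sbSpec_split (D := D) hz (mem_progInstrs.1 hSP).2.2.2.symm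
    fun h => hvis (Or.inl h)
  refine ⟨l1, l2, hC.sb i ▸ hsb, ?_⟩
  simp only [hasAddr, List.mem_map, Prod.exists, exists_and_right, exists_eq_right]
  rintro ⟨w, hw⟩
  obtain ⟨k', hzk', hk', hW⟩ := hl1 _ hw
  obtain ⟨hst, -⟩ := sbEntry_eq_some.1 hW
  have hWP : (⟨i, k', .st a w⟩ : Instr) ∈ E.progInstrs :=
    mem_progInstrs.2 ⟨hi.1, hi.2, hk'.trans hk, hst.symm⟩
  rcases H.eq_or_mo_of_po_store hrf (mem_instrs_of_mem_progInstrs hWP) ⟨w, rfl⟩ ⟨rfl, hk'⟩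
    with h | h
  · exact absurd (congrArg Instr.idx h) hzk'.ne'
  · exact H.asymm h (H.instOrder _ hSI _ (mem_instrs_of_mem_progInstrs hWP) ⟨rfl, hzk'⟩ rfl)

theorem exists_step_ld (H : E.IsWmm) (hop : E.prog i (s.cnt i) = .ld a)
    (hX : (⟨i, s.cnt i, .ld a⟩ : Instr) ∈ D) :
    ∃ s', PStep E.prog s s' ∧ E.Inv D s' ∧ s'.cnt = update s.cnt i (s.cnt i + 1) := by
  obtain ⟨S, hrf⟩ := H.rf_total _ (mem_instrs_of_mem_progInstrs (hC.isMoPrefix.subset hX)) a rfl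
  obtain ⟨v, hS⟩ := (H.ldVal S _ a hrf rfl).1
  by_cases hvis : E.Visible D a S
  · have hp : E.Pending D s.cnt i a (s.cnt i) S v := ⟨le_rfl, hX, hrf, hS, hvis⟩
    by_cases hO : E.Overwritten D a S
    · exact hC.exists_step_ldIb hi hk H hop hp hO
    · exact hC.exists_step_ldMem hi hk H hop hp hO
  · obtain ⟨l1, l2, hsb, hl1⟩ := hC.exists_sb_forward hi hk H hX hrf hS hvis
    exact ⟨_, .ldSb s i a v l1 l2 hop hsb hl1, hC.of_step hi hk rfl rfl
      (hC.sb_eq_of_not_store (by simp [hop])) (hC.res.update_setRes H hop hrf hS)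
      hC.ib_update_succ, rfl⟩

end

theorem exists_step (hC : E.Inv D s) (hi : 1 ≤ i ∧ i ≤ E.N) (hk : s.cnt i < E.len i)
    (H : E.IsWmm) (hready : E.Ready D ⟨i, s.cnt i, E.prog i (s.cnt i)⟩) :
    ∃ s', PStep E.prog s s' ∧ E.Inv D s' ∧ s'.cnt = update s.cnt i (s.cnt i + 1) := by
  rcases hop : E.prog i (s.cnt i) with a | ⟨a, v⟩ | _ | _ | _ <;>
    simp only [Ready, hop] at hready
  · exact hC.exists_step_ld hi hk H hop hready
  · exact hC.exists_step_store hi hk H hop hready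
  · exact hC.exists_step_commit hi hk H hop hready
  · exact hC.exists_step_reconcile hi hk H hop hready
  · exact hC.exists_step_nm hi hk hop

theorem exists_steps (hC : E.Inv D s) (hi : 1 ≤ i ∧ i ≤ E.N) (H : E.IsWmm) {T : ℕ}
    (hT : T ≤ E.len i) (hready : ∀ k, s.cnt i ≤ k → k < T → E.Ready D ⟨i, k, E.prog i k⟩) :
    ∃ s', Relation.ReflTransGen (PStep E.prog) s s' ∧ E.Inv D s' ∧
      s'.cnt = update s.cnt i (max (s.cnt i) T) := by
  rcases le_total T (s.cnt i) with hTc | hcT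
  · exact ⟨s, .refl, hC, by simp [max_eq_left hTc]⟩
  rw [max_eq_right hcT]
  induction T, hcT using Nat.le_induction with
  | base => exact ⟨s, .refl, hC, by simp⟩
  | succ T hcT ih =>
    obtain ⟨s1, hs1, hC1, hcnt1⟩ := ih (by omega) fun k h1 h2 => hready k h1 (by omega)
    have hT1 : s1.cnt i = T := by simp [hcnt1]
    obtain ⟨s2, hs2, hC2, hcnt2⟩ :=
      hC1.exists_step hi (by omega) H (hT1 ▸ hready T hcT (Nat.lt_succ_self T))
    exact ⟨s2, hs1.tail hs2, hC2, by rw [hcnt2, hT1, hcnt1, update_idem]⟩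

theorem insert_of_not_store (hC : E.Inv D s) (H : E.IsWmm) (hZ : E.IsNext D Z)
    (hnst : ∀ a v, Z.op ≠ .st a v) : E.Inv (insert Z D) s := by
  have hSZ : ∀ {S : Instr} {a v}, S.op = .st a v → S ≠ Z := fun h hSZ => hnst _ _ (hSZ ▸ h)
  refine ⟨hC.isMoPrefix.insert hZ, hC.cnt_le, fun a S v hvis hO hS => ?_, fun p => ?_, hC.res,
    fun p b => (hC.ib p b).mono (fun k v h => ?_) rfl⟩
  · refine hC.mem a S v (hvis.imp_left fun h => (Finset.mem_insert.1 h).resolve_left (hSZ hS))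
      (fun ⟨W, hW, hWst, hSW⟩ => hO ⟨W, Finset.mem_insert_of_mem hW, hWst, hSW⟩) hS
  · rw [hC.sb, sbSpec_insert fun k a v h => hSZ (S := ⟨p, k, .st a v⟩) rfl h]
  · rcases h.of_insert H hC.isMoPrefix hZ with h | ⟨-, -, ⟨w, hw⟩, -⟩
    · exact h
    · exact absurd hw (hnst _ _)

theorem mem_dequeue (hC : E.Inv D s) (H : E.IsWmm) (hZ : E.IsNext D Z)
    (hst : Z.op = .st a v) (b : ℕ) (S : Instr) (w : ℕ) (hvis : E.Visible (insert Z D) b S)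
    (hO : ¬ E.Overwritten (insert Z D) b S) (hS : S.op = .st b w) :
    update s.mem a v b = w := by
  have hZover : S ≠ Z → E.Visible D b S → isStoreTo b Z → False := fun hSZ hvis hZb =>
    hO ⟨Z, Finset.mem_insert_self Z D, hZb, by
      rcases hvis with hS | rfl
      · exact hC.isMoPrefix.mo_of_not_mem S hS Z hZ.mem hZ.not_mem
      · exact H.init_mo_of_mem_progInstrs hZ.mem hZb⟩
  by_cases hSZ : S = Z
  · subst hSZ
    obtain ⟨rfl, rfl⟩ := IOp.st.inj (hS.symm.trans hst)
    exact update_self ..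
  have hvis' : E.Visible D b S :=
    hvis.imp_left fun h => (Finset.mem_insert.1 h).resolve_left hSZ
  have hba : b ≠ a := fun hba => hZover hSZ hvis' ⟨v, hba ▸ hst⟩
  rw [update_of_ne hba]
  exact hC.mem b S w hvis'
    (fun ⟨W, hW, hWst, hSW⟩ => hO ⟨W, Finset.mem_insert_of_mem hW, hWst, hSW⟩) hS

/-- The old memory value pushed by the dequeue serves exactly the loads that `Z` makes stale;
processors skipped by the push have no pending load on the address. -/
theorem ib_dequeue (hC : E.Inv D s) (H : E.IsWmm) (hZ : E.IsNext D Z)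
    (hst : Z.op = .st a v) (hz : Z.idx < s.cnt Z.proc) (p b : ℕ) :
    IbCovers (E.Stale (insert Z D) s.cnt p b)
      (if p = Z.proc ∨ hasAddr (s.sb p) a then s.ib p else (a, s.mem a) :: s.ib p) b := by
  have hD := hC.isMoPrefix
  rcases eq_or_ne b a with rfl | hba
  swap
  · refine (hC.ib p b).mono (fun k w h => ?_) (by split_ifs <;> simp [hba.symm])
    rcases h.of_insert H hD hZ with h | ⟨-, -, ⟨w', hw'⟩, -⟩
    · exact h
    · exact absurd (IOp.st.inj (hst.symm.trans hw')).1 hba.symm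
  have hpend : ∀ {k w}, E.Stale (insert Z D) s.cnt p b k w →
      ∃ S, E.Pending D s.cnt p b k S w ∧ (¬ E.Stale D s.cnt p b k w → ¬ E.Overwritten D b S) := by
    intro k w h
    rcases h.of_insert H hD hZ with h' | ⟨S, hp, -, hO⟩
    · exact ⟨h'.choose, h'.choose_spec.1, fun h'' => absurd h' h''⟩
    · exact ⟨S, hp, fun _ => hO⟩
  split_ifs with hcase
  · refine IbCovers.of_forall_not (fun k w h => ?_)
    obtain ⟨S, hp, -⟩ := hpend h
    rcases hcase with rfl | hsb
    · obtain ⟨j, z, o⟩ := Z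
      obtain rfl := hst
      exact hZ.not_mem (hp.po_store_mem H hD hZ.mem (hz.trans_le hp.cnt_le))
    · have hi := mem_progInstrs.1 (hD.subset hp.mem)
      exact hp.not_hasAddr_sbSpec H hD (hC.cnt_le_len ⟨hi.1, hi.2.1⟩) (hC.sb p ▸ hsb)
  · refine (hC.ib p b).cons fun k w h => or_iff_not_imp_left.2 fun hnot => ?_
    obtain ⟨S, hp, hO⟩ := hpend h
    exact ⟨(hC.mem b S w hp.visible (hO hnot) hp.op).symm, fun k' hk' w' =>
      H.not_stale_of_not_overwritten hD hp.rf hp.visible (hO hnot) hk'⟩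

/-- Older stores to the same address are `mo`-before `Z` (Inst-Order), so already dequeued. -/
theorem exists_sb_dequeue (hC : E.Inv D s) (H : E.IsWmm) (hZ : E.IsNext D Z)
    (hst : Z.op = .st a v) (hz : Z.idx < s.cnt Z.proc) :
    ∃ l1 l2, s.sb Z.proc = l1 ++ (a, v) :: l2 ∧ ¬ hasAddr l2 a ∧
      E.sbSpec (insert Z D) Z.proc (s.cnt Z.proc) = l1 ++ l2 := by
  obtain ⟨j, z, o⟩ := Z
  obtain rfl : o = .st a v := hst
  have hZP := mem_progInstrs.1 hZ.mem
  obtain ⟨l1, l2, hsb, hins, -, hl2⟩ := sbSpec_split (D := D) hz hZP.2.2.2.symm hZ.not_mem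
  refine ⟨l1, l2, hC.sb j ▸ hsb, ?_, hins⟩
  simp only [hasAddr, List.mem_map, Prod.exists, exists_and_right, exists_eq_right]
  rintro ⟨w, hw⟩
  obtain ⟨k', hk', hW⟩ := hl2 _ hw
  obtain ⟨hWst, hWD⟩ := sbEntry_eq_some.1 hW
  have hWP : (⟨j, k', .st a w⟩ : Instr) ∈ E.progInstrs :=
    mem_progInstrs.2 ⟨hZP.1, hZP.2.1, hk'.trans hZP.2.2.1, hWst.symm⟩
  refine H.asymm (hZ.mo_of_ne _ hWP hWD fun h => hk'.ne (congrArg Instr.idx h)) ?_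
  exact H.instOrder _ (mem_instrs_of_mem_progInstrs hWP) _ (mem_instrs_of_mem_progInstrs hZ.mem)
    ⟨rfl, hk'⟩ rfl

theorem exists_dequeue (hC : E.Inv D s) (H : E.IsWmm) (hZ : E.IsNext D Z)
    (hst : Z.op = .st a v) (hz : Z.idx < s.cnt Z.proc) :
    ∃ s', PStep E.prog s s' ∧ E.Inv (insert Z D) s' ∧ s'.cnt = s.cnt := by
  obtain ⟨l1, l2, hsb, hl2, hins⟩ := hC.exists_sb_dequeue H hZ hst hz
  refine ⟨_, .deqSb s Z.proc a v l1 l2 hsb hl2, ⟨hC.isMoPrefix.insert hZ, hC.cnt_le,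
    hC.mem_dequeue H hZ hst, fun p => ?_, hC.res, hC.ib_dequeue H hZ hst hz⟩, rfl⟩
  rcases eq_or_ne p Z.proc with rfl | hp
  · simpa using hins.symm
  · simp only [update_of_ne hp]
    rw [hC.sb, sbSpec_insert fun k a v h => hp (congrArg Instr.proc h)]

end Inv

theorem SfExecuted.mono {cnt' : ℕ → ℕ} (hsf : SfExecuted D cnt) (hle : ∀ j, cnt j ≤ cnt' j) :
    SfExecuted D cnt' :=
  fun X hX h => (hsf X hX h).trans_le (hle X.proc)

theorem SfExecuted.insert (hsf : SfExecuted D cnt)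
    (hZ : Z.op.IsStoreOrFence → Z.idx < cnt Z.proc) : SfExecuted (insert Z D) cnt := by
  intro X hX h
  rcases Finset.mem_insert.1 hX with rfl | hX
  exacts [hZ h, hsf X hX h]

theorem SfExecuted.not_mem (hsf : SfExecuted D cnt) {X : Instr} (h : X.op.IsStoreOrFence)
    (hX : cnt X.proc ≤ X.idx) : X ∉ D :=
  fun hXD => (hsf X hXD h).not_ge hX

theorem le_update_max (cnt : ℕ → ℕ) (i T j : ℕ) : cnt j ≤ update cnt i (max (cnt i) T) j := by
  rcases eq_or_ne j i with rfl | h <;> simp [*]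

theorem IsNext.mem_of_po (hZ : E.IsNext D Z) (H : E.IsWmm) (hZsf : Z.op.IsStoreOrFence)
    {Y : Instr} (hY : Y ∈ E.progInstrs) (hpo : po Y Z) (hst : ∀ a v, Y.op ≠ .st a v)
    (hnm : Y.op ≠ .nm) : Y ∈ D := by
  by_contra hYD
  refine H.asymm (hZ.mo_of_ne Y hY hYD fun h => (h ▸ hpo).2.false) ?_
  exact H.instOrder Y (mem_instrs_of_mem_progInstrs hY) Z (mem_instrs_of_mem_progInstrs hZ.mem)
    hpo (ordTable_of_isStoreOrFence hst hnm hZsf)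

/-- Stated for every `D'` between `D` and `insert Z D`, to serve both stores and fences. -/
theorem IsNext.ready_of_lt (hZ : E.IsNext D Z) (H : E.IsWmm) (hZsf : Z.op.IsStoreOrFence)
    (hsf : SfExecuted D cnt) {D' : Finset Instr} (hDD' : D ⊆ D') (hD' : D' ⊆ insert Z D)
    (hk1 : cnt Z.proc ≤ k) (hk2 : k < Z.idx) :
    E.Ready D' ⟨Z.proc, k, E.prog Z.proc k⟩ := by
  have hZP := mem_progInstrs.1 hZ.mem
  have hY := mk_mem_progInstrs (E := E) ⟨hZP.1, hZP.2.1⟩ (hk2.trans hZP.2.2.1)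
  have hYD' : (E.prog Z.proc k).IsStoreOrFence → (⟨Z.proc, k, E.prog Z.proc k⟩ : Instr) ∉ D' :=
    fun h hYD => (Finset.mem_insert.1 (hD' hYD)).elim (fun hYZ => hk2.ne (congrArg Instr.idx hYZ))
      (hsf.not_mem h hk1)
  have hlf := hZ.mem_of_po H hZsf hY ⟨rfl, hk2⟩
  rcases hop : E.prog Z.proc k with b | ⟨b, w⟩ | _ | _ | _ <;> simp only [hop] at hY hYD' hlf <;>
    simp only [Ready]
  · exact hDD' (hlf (by simp) (by simp))
  · exact hYD' trivial
  · exact hDD' (hlf (by simp) (by simp))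
  · exact absurd (hDD' (hlf (by simp) (by simp))) (hYD' trivial)

namespace Inv

section

variable (hC : E.Inv D s) (H : E.IsWmm) (hsf : SfExecuted D s.cnt) (hZ : E.IsNext D Z)
include hC H hsf hZ

theorem exists_steps_fence (hfence : Z.op = .commit ∨ Z.op = .reconcile) :
    ∃ s', Relation.ReflTransGen (PStep E.prog) s s' ∧ E.Inv (insert Z D) s' ∧
      SfExecuted (insert Z D) s'.cnt := by
  have hZP := mem_progInstrs.1 hZ.mem
  have hZsf : Z.op.IsStoreOrFence := by rcases hfence with h | h <;> simp [h, IOp.IsStoreOrFence]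
  have hready : ∀ k, s.cnt Z.proc ≤ k → k < Z.idx + 1 →
      E.Ready (insert Z D) ⟨Z.proc, k, E.prog Z.proc k⟩ := by
    intro k hk1 hk2
    rcases (Nat.lt_succ_iff.1 hk2).lt_or_eq with hk | rfl
    · exact hZ.ready_of_lt H hZsf hsf (Finset.subset_insert _ _) subset_rfl hk1 hk
    rw [← hZP.2.2.2]
    change E.Ready _ Z
    rcases hfence with h | h <;> simp only [Ready, h]
    · exact Finset.mem_insert_self Z D
    · intro W hW hmo
      rcases Finset.mem_insert.1 hW with rfl | hW
      · exact H.irrefl W hmo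
      · exact H.asymm hmo (hC.isMoPrefix.mo_of_not_mem W hW Z hZ.mem hZ.not_mem)
  obtain ⟨s', hs', hC', hcnt⟩ := (hC.insert_of_not_store H hZ (by rcases hfence with h | h <;>
    simp [h])).exists_steps ⟨hZP.1, hZP.2.1⟩ H hZP.2.2.1 hready
  refine ⟨s', hs', hC', (hsf.mono fun j => hcnt ▸ le_update_max _ _ _ j).insert fun _ => ?_⟩
  simp [hcnt]

theorem exists_steps_store (hst : Z.op = .st a v) :
    ∃ s', Relation.ReflTransGen (PStep E.prog) s s' ∧ E.Inv (insert Z D) s' ∧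
      SfExecuted (insert Z D) s'.cnt := by
  have hZP := mem_progInstrs.1 hZ.mem
  have hZsf : Z.op.IsStoreOrFence := by simp [hst, IOp.IsStoreOrFence]
  have hready : ∀ k, s.cnt Z.proc ≤ k → k < Z.idx + 1 → E.Ready D ⟨Z.proc, k, E.prog Z.proc k⟩ := by
    intro k hk1 hk2
    rcases (Nat.lt_succ_iff.1 hk2).lt_or_eq with hk | rfl
    · exact hZ.ready_of_lt H hZsf hsf subset_rfl (Finset.subset_insert _ _) hk1 hk
    rw [← hZP.2.2.2]
    change E.Ready _ Z
    simpa only [Ready, hst] using hZ.not_mem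
  obtain ⟨s1, hs1, hC1, hcnt1⟩ := hC.exists_steps ⟨hZP.1, hZP.2.1⟩ H hZP.2.2.1 hready
  have hz : Z.idx < s1.cnt Z.proc := by simp [hcnt1]
  obtain ⟨s2, hs2, hC2, hcnt2⟩ := hC1.exists_dequeue H hZ hst hz
  refine ⟨s2, hs1.tail hs2, hC2, (hsf.mono fun j => ?_).insert fun _ => hcnt2 ▸ hz⟩
  exact hcnt2 ▸ hcnt1 ▸ le_update_max _ _ _ j

theorem exists_steps_next :
    ∃ s', Relation.ReflTransGen (PStep E.prog) s s' ∧ E.Inv (insert Z D) s' ∧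
      SfExecuted (insert Z D) s'.cnt := by
  have hdelay : (∀ a v, Z.op ≠ .st a v) → ¬ Z.op.IsStoreOrFence → ∃ s',
      Relation.ReflTransGen (PStep E.prog) s s' ∧ E.Inv (insert Z D) s' ∧
      SfExecuted (insert Z D) s'.cnt := fun hnst hnsf =>
    ⟨s, .refl, hC.insert_of_not_store H hZ hnst, hsf.insert fun h => absurd h hnsf⟩
  rcases hop : Z.op with b | ⟨a, v⟩ | _ | _ | _
  · exact hdelay (by simp [hop]) (by simp [hop, IOp.IsStoreOrFence])
  · exact hC.exists_steps_store H hsf hZ hop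
  · exact hC.exists_steps_fence H hsf hZ (Or.inl hop)
  · exact hC.exists_steps_fence H hsf hZ (Or.inr hop)
  · exact hdelay (by simp [hop]) (by simp [hop, IOp.IsStoreOrFence])

end

theorem exists_steps_all (H : E.IsWmm) (n : ℕ) :
    ∀ D s, (E.progInstrs \ D).card = n → E.Inv D s → SfExecuted D s.cnt →
      ∃ s', Relation.ReflTransGen (PStep E.prog) s s' ∧ E.Inv E.progInstrs s' ∧
        SfExecuted E.progInstrs s'.cnt := by
  induction n with
  | zero =>
    intro D s hcard hC hsf
    obtain rfl : D = E.progInstrs := (Finset.sdiff_eq_empty_iff_subset.1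
      (Finset.card_eq_zero.1 hcard)).antisymm' hC.isMoPrefix.subset
    exact ⟨s, .refl, hC, hsf⟩
  | succ n ih =>
    intro D s hcard hC hsf
    obtain ⟨Z, hZ, hZmin⟩ := H.exists_mo_least (E.progInstrs \ D) (Finset.card_pos.1 (by omega))
      fun x hx => mem_instrs_of_mem_progInstrs (Finset.mem_sdiff.1 hx).1
    have hnext : E.IsNext D Z := ⟨(Finset.mem_sdiff.1 hZ).1, (Finset.mem_sdiff.1 hZ).2,
      fun W hW hWD => hZmin W (Finset.mem_sdiff.2 ⟨hW, hWD⟩)⟩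
    obtain ⟨s1, hs1, hC1, hsf1⟩ := hC.exists_steps_next H hsf hnext
    obtain ⟨s2, hs2, hC2, hsf2⟩ := ih (insert Z D) s1
      (by rw [Finset.sdiff_insert, Finset.card_erase_of_mem hZ, hcard]; rfl) hC1 hsf1
    exact ⟨s2, hs1.trans hs2, hC2, hsf2⟩

theorem exists_steps_finish (hC : E.Inv E.progInstrs s) (H : E.IsWmm)
    (hsf : SfExecuted E.progInstrs s.cnt) (n : ℕ) (hn : n ≤ E.N) :
    ∃ s', Relation.ReflTransGen (PStep E.prog) s s' ∧ E.Inv E.progInstrs s' ∧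
      SfExecuted E.progInstrs s'.cnt ∧ ∀ i, 1 ≤ i → i ≤ n → s'.cnt i = E.len i := by
  induction n with
  | zero => exact ⟨s, .refl, hC, hsf, fun i h1 h2 => by omega⟩
  | succ n ih =>
    obtain ⟨s1, hs1, hC1, hsf1, hcnt1⟩ := ih (by omega)
    have hi : 1 ≤ n + 1 ∧ n + 1 ≤ E.N := ⟨by omega, hn⟩
    have hready : ∀ k, s1.cnt (n + 1) ≤ k → k < E.len (n + 1) →
        E.Ready E.progInstrs ⟨n + 1, k, E.prog (n + 1) k⟩ := by
      intro k hk1 hk2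
      have hY := mk_mem_progInstrs (E := E) hi hk2
      have hsfY := fun h => hsf1.not_mem h hk1 hY
      rcases hop : E.prog (n + 1) k with b | ⟨b, w⟩ | _ | _ | _ <;> simp only [hop] at hY hsfY <;>
        simp only [Ready]
      · exact hY
      · exact (hsfY trivial).elim
      · exact hY
      · exact (hsfY trivial).elim
    obtain ⟨s2, hs2, hC2, hcnt2⟩ := hC1.exists_steps hi H le_rfl hready
    refine ⟨s2, hs1.trans hs2, hC2, hsf1.mono fun j => hcnt2 ▸ le_update_max _ _ _ j,
      fun i h1 h2 => ?_⟩
    rw [hcnt2]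
    rcases eq_or_ne i (n + 1) with rfl | hin
    · simpa using hC1.cnt_le_len hi
    · rw [update_of_ne hin, hcnt1 i h1 (by omega)]

end Inv

theorem inv_init : E.Inv ∅ (PInit E.m0) where
  isMoPrefix := ⟨Finset.empty_subset _, by simp⟩
  cnt_le _ := Nat.zero_le _
  mem a S v hvis _ hS := by
    obtain rfl : S = initInstr E.m0 a := hvis.resolve_left (Finset.notMem_empty S)
    exact (IOp.st.inj hS).2
  sb _ := by simp [sbSpec, PInit]
  res _ _ _ _ _ hk := absurd hk (Nat.not_lt_zero _)
  ib _ _ := IbCovers.of_forall_not (fun _ _ ⟨_, hp, _⟩ => Finset.notMem_empty _ hp.mem)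

theorem IsWmm.exists_run (H : E.IsWmm) :
    ∃ s, Relation.ReflTransGen (PStep E.prog) (PInit E.m0) s ∧
      (∀ i, s.cnt i = if 1 ≤ i ∧ i ≤ E.N then E.len i else 0) ∧ E.ResOk s.cnt s.res := by
  obtain ⟨s1, hs1, hC1, hsf1⟩ := inv_init.exists_steps_all H _ ∅ (PInit E.m0) rfl
    fun _ h => absurd h (Finset.notMem_empty _)
  obtain ⟨s2, hs2, hC2, -, hcnt⟩ := hC1.exists_steps_finish H hsf1 E.N le_rfl
  refine ⟨s2, hs1.trans hs2, fun i => ?_, hC2.res⟩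
  split_ifs with hi
  · exact hcnt i hi.1 hi.2
  · simpa [hi] using hC2.cnt_le i

end CandidateExec

end WmmI2E

/-- Completeness of WMM I²E w.r.t. the WMM axiomatic model:
given any `mo`, `rf` over a finite program's instructions (processors 1..N,
processor `i` having `len i` instructions, plus `mo`-minimal initialization
stores) satisfying the Inst-Order and Ld-Val axioms of WMM, there is an
execution of the WMM I²E machine of the same program in which every load
returns the value of the store assigned to it by `rf`. -/
theorem wmm_i2e_complete (N : ℕ) (len : ℕ → ℕ) (prog : ℕ → ℕ → IOp)
    (m0 : ℕ → ℕ)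
    (I : Set Instr)
    (hI : I = { x : Instr | (1 ≤ x.proc ∧ x.proc ≤ N ∧ x.idx < len x.proc ∧
                              x.op = prog x.proc x.idx) ∨
                            (∃ a, x = initInstr m0 a) })
    (mo rf : Instr → Instr → Prop)
    (hmo_irrefl : ∀ x, ¬ mo x x)
    (hmo_trans : ∀ x y z, mo x y → mo y z → mo x z)
    (hmo_total : ∀ x ∈ I, ∀ y ∈ I, x ≠ y → mo x y ∨ mo y x)
    -- initialization stores are `mo`-minimal among same-address accesses:
    (hmin : ∀ a, ∀ x ∈ I, (isStoreTo a x ∨ isLoadOf a x) →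
      x ≠ initInstr m0 a → mo (initInstr m0 a) x)
    -- Axiom Inst-Order:
    (hinstOrder : ∀ x ∈ I, ∀ y ∈ I, po x y → ordTable x.op y.op → mo x y)
    (hrf_mem : ∀ S L, rf S L → S ∈ I ∧ L ∈ I)
    -- every load reads from exactly one store:
    (hrf_tot : ∀ L ∈ I, ∀ a, L.op = IOp.ld a → ∃ S, rf S L)
    -- Axiom Ld-Val:
    (hldVal : ∀ S L a, rf S L → L.op = IOp.ld a →
      isStoreTo a S ∧ (mo S L ∨ po S L) ∧
      ∀ S' ∈ I, isStoreTo a S' → (mo S' L ∨ po S' L) → S' = S ∨ mo S' S) :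
    ∃ s : PSt, Relation.ReflTransGen (PStep prog) (PInit m0) s ∧
      (∀ i, s.cnt i = if 1 ≤ i ∧ i ≤ N then len i else 0) ∧
      (∀ i k a S v, 1 ≤ i → i ≤ N → k < len i → prog i k = IOp.ld a →
        rf S ⟨i, k, IOp.ld a⟩ → S.op = IOp.st a v → s.res i k = v) := by
  subst hI
  obtain ⟨s, hs, hcnt, hres⟩ := WmmI2E.CandidateExec.IsWmm.exists_run
    (E := ⟨N, len, prog, m0, mo, rf⟩)
    ⟨hmo_irrefl, hmo_trans, hmo_total, hmin, hinstOrder, hrf_mem, hrf_tot, hldVal⟩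
  refine ⟨s, hs, hcnt, fun i k a S v h1 h2 hk => hres i k a S v ?_⟩
  simpa [hcnt, h1, h2] using hk
end
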